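/- arXiv:quant-ph/0304040 — 3 statements merged into one kernel-verified Lean document; each statement's English description precedes it below -/
import Mathlib

section
/- Let {|ψ_nm⟩}_{n,m=0}^{d−1} be the canonical orthonormal basis of maximally entangled states of C^d ⊗ C^d, |ψ_nm⟩ = (1/√d) Σ_{k} e^{2πikn/d} |k⟩|(k+m) mod d⟩. Consider the ensemble {p_nm, |ψ_nm⟩} on AB with detectors |ψ_nm⟩* (complex conjugate in the computational basis) on CD, and let ρ_ABCD = Σ_{nm} p_nm |ψ_nm⟩⟨ψ_nm|_AB ⊗ (|ψ_nm⟩⟨ψ_nm|)*_CD. Then the relative entropy of entanglement of ρ_ABCD across the AC:BD cut satisfies E^{AC:BD}(ρ_ABCD) ≤ S(ρ_ABCD ‖ ρ_ABCD^{unif}) = 2 log₂ d − H_s, where ρ_ABCD^{unif} is the corresponding state with uniform probabilities p_nm = 1/d², which is separable across AC:BD, and H_s = H({p_nm}). -/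
set_option linter.unusedSectionVars false
set_option maxHeartbeats 1600000


open Matrix
open scoped Kronecker ComplexOrder

noncomputable section

namespace LAI

/-- Shannon entropy (base 2) of a finitely supported distribution. -/
def shannon {α : Type*} [Fintype α] (p : α → ℝ) : ℝ :=
  -∑ a, p a * Real.logb 2 (p a)

open scoped Classical in
/-- von Neumann entropy (base 2) of a matrix (via eigenvalues of a Hermitian matrix). -/
def vN {n : Type*} [Fintype n] [DecidableEq n] (ρ : Matrix n n ℂ) : ℝ :=
  if h : ρ.IsHermitian then -∑ i, h.eigenvalues i * Real.logb 2 (h.eigenvalues i) else 0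

/-- Partial trace over the second subsystem. -/
def trB {α β : Type*} [Fintype β] (ρ : Matrix (α × β) (α × β) ℂ) : Matrix α α ℂ :=
  Matrix.of fun i j => ∑ k, ρ (i, k) (j, k)

/-- Partial trace over the first subsystem. -/
def trA {α β : Type*} [Fintype α] (ρ : Matrix (α × β) (α × β) ℂ) : Matrix β β ℂ :=
  Matrix.of fun i j => ∑ k, ρ (k, i) (k, j)

/-- Classical mutual information `I(X:Y)` of a joint distribution `P`. -/
def mi {α β : Type*} [Fintype α] [Fintype β] (P : α → β → ℝ) : ℝ :=
  shannon (fun a => ∑ b, P a b) + shannon (fun b => ∑ a, P a b)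
    - shannon (fun ab : α × β => P ab.1 ab.2)

/-- The Holevo quantity `χ` of the ensemble `{p x, ρ x}`. -/
def holevo {X n : Type*} [Fintype X] [Fintype n] [DecidableEq n]
    (p : X → ℝ) (ρ : X → Matrix n n ℂ) : ℝ :=
  vN (∑ x, (p x : ℂ) • ρ x) - ∑ x, p x * vN (ρ x)

/-- The rank-one projector `|u⟩⟨u|` onto a vector `u`. -/
def proj {n : Type*} (u : n → ℂ) : Matrix n n ℂ :=
  Matrix.vecMulVec u (star u)

/-- A density matrix: positive semidefinite with unit trace. -/
def IsState {n : Type*} [Fintype n] (ρ : Matrix n n ℂ) : Prop :=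
  ρ.PosSemidef ∧ ρ.trace = 1

/-- Quantum mutual information of a bipartite state, `S(ρ_A) + S(ρ_B) - S(ρ_AB)`. -/
def qmi {α β : Type*} [Fintype α] [DecidableEq α] [Fintype β] [DecidableEq β]
    (ρ : Matrix (α × β) (α × β) ℂ) : ℝ :=
  vN (trB ρ) + vN (trA ρ) - vN ρ

/-- A (finite-depth, adaptive) LOCC measurement protocol on a bipartite system `A ⊗ B`:
a tree of alternating local measurements, where each local measurement is given by
Kraus operators and each branch may depend on all previous outcomes
(which are communicated classically). -/
inductive LOCC (A B : Type) [Fintype A] [DecidableEq A] [Fintype B] [DecidableEq B] : Type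
  | finish : LOCC A B
  | alice (k : ℕ) (V : Fin k → Matrix A A ℂ)
      (hV : ∑ a, (V a)ᴴ * V a = 1)
      (next : Fin k → LOCC A B) : LOCC A B
  | bob (k : ℕ) (W : Fin k → Matrix B B ℂ)
      (hW : ∑ b, (W b)ᴴ * W b = 1)
      (next : Fin k → LOCC A B) : LOCC A B

namespace LOCC

variable {A B : Type} [Fintype A] [DecidableEq A] [Fintype B] [DecidableEq B]

/-- The possible (complete) outcome records of an LOCC protocol. -/
def records : LOCC A B → Finset (List ℕ)
  | .finish => {[]}
  | .alice k _ _ next =>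
      Finset.univ.biUnion fun a : Fin k => (records (next a)).image (List.cons a.val)
  | .bob k _ _ next =>
      Finset.univ.biUnion fun b : Fin k => (records (next b)).image (List.cons b.val)

/-- The probability that a given LOCC protocol, applied to the state `ρ`, produces the
outcome record `r` (computed via unnormalized post-measurement states). -/
def outP : LOCC A B → Matrix (A × B) (A × B) ℂ → List ℕ → ℝ
  | .finish, ρ, [] => ρ.trace.re
  | .finish, _, _ :: _ => 0
  | .alice k V _ next, ρ, a :: l =>
      if h : a < k then
        outP (next ⟨a, h⟩)
          ((V ⟨a, h⟩ ⊗ₖ (1 : Matrix B B ℂ)) * ρ * (V ⟨a, h⟩ ⊗ₖ (1 : Matrix B B ℂ))ᴴ) l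
      else 0
  | .alice _ _ _ _, _, [] => 0
  | .bob k W _ next, ρ, b :: l =>
      if h : b < k then
        outP (next ⟨b, h⟩)
          (((1 : Matrix A A ℂ) ⊗ₖ W ⟨b, h⟩) * ρ * ((1 : Matrix A A ℂ) ⊗ₖ W ⟨b, h⟩)ᴴ) l
      else 0
  | .bob _ _ _ _, _, [] => 0

/-- The classical mutual information between the signal label of the ensemble `{p x, ρ x}`
and the full record of outcomes of the LOCC protocol `P`. -/
def info {X : Type*} [Fintype X] (P : LOCC A B) (p : X → ℝ)
    (ρ : X → Matrix (A × B) (A × B) ℂ) : ℝ :=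
  shannon p
    + (-∑ r ∈ P.records, (∑ x, p x * P.outP (ρ x) r)
          * Real.logb 2 (∑ x, p x * P.outP (ρ x) r))
    - (-∑ x, ∑ r ∈ P.records, (p x * P.outP (ρ x) r)
          * Real.logb 2 (p x * P.outP (ρ x) r))

end LOCC

/-- Entanglement of formation: minimal average entanglement (entropy of the reduction)
over pure-state decompositions. -/
def EoF {A B : Type*} [Fintype A] [DecidableEq A] [Fintype B] [DecidableEq B]
    (ρ : Matrix (A × B) (A × B) ℂ) : ℝ :=
  sInf { e | ∃ (k : ℕ) (q : Fin k → ℝ) (ψ : Fin k → (A × B → ℂ)),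
    (∀ i, 0 ≤ q i) ∧ (∑ i, q i = 1) ∧
    (∀ i, ∑ v, Complex.normSq (ψ i v) = 1) ∧
    ρ = ∑ i, (q i : ℂ) • proj (ψ i) ∧
    e = ∑ i, q i * vN (trB (proj (ψ i))) }

open scoped Classical in
/-- Matrix logarithm (base 2) of a Hermitian matrix, via the spectral decomposition
(with the convention `log 0 = 0`). -/
def matLog2 {n : Type*} [Fintype n] [DecidableEq n] (ρ : Matrix n n ℂ) : Matrix n n ℂ :=
  if h : ρ.IsHermitian then
    (h.eigenvectorUnitary : Matrix n n ℂ)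
      * Matrix.diagonal (fun i => (Real.logb 2 (h.eigenvalues i) : ℂ))
      * (star (h.eigenvectorUnitary : Matrix n n ℂ))
  else 0

/-- Quantum relative entropy (base 2), `S(ρ‖σ) = tr(ρ log₂ ρ − ρ log₂ σ)`. -/
def relEnt {n : Type*} [Fintype n] [DecidableEq n] (ρ σ : Matrix n n ℂ) : ℝ :=
  (Matrix.trace (ρ * matLog2 ρ - ρ * matLog2 σ)).re

/-- Separability of a bipartite state across the `A : B` cut. -/
def IsSep {A B : Type*} [Fintype A] [DecidableEq A] [Fintype B] [DecidableEq B]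
    (σ : Matrix (A × B) (A × B) ℂ) : Prop :=
  ∃ (k : ℕ) (w : Fin k → ℝ) (ζA : Fin k → Matrix A A ℂ) (ζB : Fin k → Matrix B B ℂ),
    (∀ i, 0 ≤ w i) ∧ (∑ i, w i = 1) ∧
    (∀ i, IsState (ζA i)) ∧ (∀ i, IsState (ζB i)) ∧
    σ = ∑ i, (w i : ℂ) • (ζA i ⊗ₖ ζB i)

/-- Relative entropy of entanglement across the `A : B` cut. -/
def REE {A B : Type*} [Fintype A] [DecidableEq A] [Fintype B] [DecidableEq B]
    (σ : Matrix (A × B) (A × B) ℂ) : ℝ :=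
  sInf { r | ∃ ζ : Matrix (A × B) (A × B) ℂ, IsState ζ ∧ IsSep ζ ∧ r = relEnt σ ζ }

/-- Reshuffle a state of `(A ⊗ B) ⊗ (C ⊗ D)` into a state of `(A ⊗ C) ⊗ (B ⊗ D)`,
exhibiting the `AC : BD` cut. -/
def toACBD {A B C D : Type*} (ρ : Matrix ((A × B) × (C × D)) ((A × B) × (C × D)) ℂ) :
    Matrix ((A × C) × (B × D)) ((A × C) × (B × D)) ℂ :=
  ρ.submatrix (fun x => ((x.1.1, x.2.1), (x.1.2, x.2.2)))
    (fun x => ((x.1.1, x.2.1), (x.1.2, x.2.2)))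

/-- Binary entropy (base 2). -/
def binEnt (p : ℝ) : ℝ := -(p * Real.logb 2 p) - (1 - p) * Real.logb 2 (1 - p)

end LAI

namespace LAI

/-- The canonical maximally entangled states
`|ψ_nm⟩ = (1/√d) ∑_k e^{2πikn/d} |k⟩|(k+m) mod d⟩` of `ℂ^d ⊗ ℂ^d`. -/
def canME (d : ℕ) [NeZero d] (n m : Fin d) : Fin d × Fin d → ℂ := fun kl =>
  if kl.2 = kl.1 + m then
    ((1 / Real.sqrt d : ℝ) : ℂ)
      * Complex.exp (2 * (Real.pi : ℂ) * Complex.I * (kl.1.val : ℂ) * (n.val : ℂ) / (d : ℂ))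
  else 0

section GenAux
variable (d : ℕ) [NeZero d]

def om : ℂ := Complex.exp (2 * Real.pi * Complex.I / d)

lemma om_ne_zero : om d ≠ 0 := Complex.exp_ne_zero _

lemma om_pow_d : om d ^ (d : ℕ) = 1 := by
  rw [om, ← Complex.exp_nat_mul]
  have hd : (d : ℂ) ≠ 0 := Nat.cast_ne_zero.mpr (NeZero.ne d)
  rw [mul_div_cancel₀ _ hd, Complex.exp_two_pi_mul_I]

lemma om_zpow_d (t : ℤ) : om d ^ ((d : ℤ) * t) = 1 := by
  rw [_root_.zpow_mul, zpow_natCast, om_pow_d, _root_.one_zpow]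

lemma om_zpow_eq_one_iff (t : ℤ) : om d ^ t = 1 ↔ (d : ℤ) ∣ t := by
  constructor
  · intro h
    have hz : Complex.exp ((t : ℂ) * (2 * Real.pi * Complex.I / d)) = 1 := by
      rw [Complex.exp_int_mul]; exact h
    rw [Complex.exp_eq_one_iff] at hz
    obtain ⟨k, hk⟩ := hz
    have hd : (d : ℂ) ≠ 0 := Nat.cast_ne_zero.mpr (NeZero.ne d)
    have h2pi : (2 * (Real.pi : ℂ) * Complex.I) ≠ 0 := by
      simp [Complex.I_ne_zero, Real.pi_ne_zero, Complex.ofReal_ne_zero]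
    have hc : (t : ℂ) = (d : ℂ) * k := by
      have hk' : (t : ℂ) * (2 * (Real.pi:ℂ) * Complex.I) = ((d:ℂ) * k) * (2 * (Real.pi:ℂ) * Complex.I) := by
        field_simp at hk
        linear_combination (2 * (Real.pi:ℂ) * Complex.I) * hk
      exact mul_right_cancel₀ h2pi hk'
    exact ⟨k, by exact_mod_cast hc⟩
  · rintro ⟨k, rfl⟩
    exact om_zpow_d d k

lemma sum_om_zpow (t : ℤ) :
    ∑ n : Fin d, om d ^ ((n : ℤ) * t) = if (d : ℤ) ∣ t then (d : ℂ) else 0 := by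
  have key : ∀ n : Fin d, om d ^ ((n : ℤ) * t) = (om d ^ t) ^ (n : ℕ) := fun n => by
    rw [mul_comm, _root_.zpow_mul, zpow_natCast]
  simp only [key]
  rw [Fin.sum_univ_eq_sum_range (fun n => (om d ^ t) ^ n)]
  by_cases h : (d : ℤ) ∣ t
  · simp [(om_zpow_eq_one_iff d t).mpr h, h]
  · rw [if_neg h, geom_sum_eq, ← zpow_natCast (om d ^ t), ← _root_.zpow_mul, mul_comm,
      om_zpow_d, sub_self, zero_div]
    intro h1
    exact h ((om_zpow_eq_one_iff d t).mp h1)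

lemma fin_add_eq_add_iff_dvd (a b c e : Fin d) :
    a + b = c + e ↔ (d : ℤ) ∣ ((a.val : ℤ) + b.val) - ((c.val : ℤ) + e.val) := by
  rw [Fin.ext_iff, Fin.val_add, Fin.val_add]
  rw [show ((a.val + b.val) % d = (c.val + e.val) % d) ↔ Nat.ModEq d (a.val + b.val) (c.val + e.val) from Iff.rfl,
    ← Int.natCast_modEq_iff, Int.modEq_iff_dvd, dvd_sub_comm]
  push_cast
  rfl

lemma fin_eq_iff_dvd (a c : Fin d) : a = c ↔ (d : ℤ) ∣ (a.val : ℤ) - (c.val : ℤ) := by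
  have := fin_add_eq_add_iff_dvd d a 0 c 0
  simpa using this

lemma canME_apply (n m : Fin d) (k l : Fin d) :
    canME d n m (k, l)
      = if l = k + m then ((1 / Real.sqrt d : ℝ) : ℂ) * om d ^ ((k.val * n.val : ℕ) : ℤ) else 0 := by
  rw [canME]
  congr 1
  rw [om, ← Complex.exp_int_mul]
  congr 1
  push_cast
  ring

lemma conj_canME_apply (n m : Fin d) (k l : Fin d) :
    (starRingEnd ℂ) (canME d n m (k, l))
      = if l = k + m then ((1 / Real.sqrt d : ℝ) : ℂ) * om d ^ (-((k.val * n.val : ℕ) : ℤ)) else 0 := by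
  rw [canME_apply]
  split_ifs
  · rw [_root_.map_mul, Complex.conj_ofReal, zpow_natCast, _root_.map_pow, _root_.zpow_neg, zpow_natCast, ← inv_pow]
    congr 2
    rw [om, ← Complex.exp_neg]
    rw [← Complex.exp_conj]
    congr 1
    rw [map_div₀, _root_.map_mul, _root_.map_mul, Complex.conj_I, Complex.conj_ofReal, map_ofNat,
      Complex.conj_natCast]
    ring
  · exact map_zero _

lemma ite_mul_ite4 {P Q R S : Prop} [Decidable P] [Decidable Q] [Decidable R] [Decidable S]
    (a b c e : ℂ) :
    (if P then a else 0) * (if Q then b else 0) * (if R then c else 0) * (if S then e else 0)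
      = if P ∧ Q ∧ R ∧ S then a * b * c * e else 0 := by
  by_cases hP : P <;> by_cases hQ : Q <;> by_cases hR : R <;> by_cases hS : S <;> simp [*]

lemma c0_sq : (((1 / Real.sqrt d : ℝ) : ℂ)) ^ 2 = ((d : ℂ))⁻¹ := by
  rw [← Complex.ofReal_pow]
  rw [div_pow, one_pow, Real.sq_sqrt (Nat.cast_nonneg d)]
  push_cast
  rw [one_div]

lemma c0_pow4 : (((1 / Real.sqrt d : ℝ) : ℂ)) ^ 4 = (((d : ℂ)) ^ 2)⁻¹ := by
  have h : (((1 / Real.sqrt d : ℝ) : ℂ)) ^ 4 = ((((1 / Real.sqrt d : ℝ) : ℂ)) ^ 2) ^ 2 := by ring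
  rw [h, c0_sq, inv_pow]

/-- Closed form for the quartic character sum over the canonical ME basis. -/
lemma quadE (x₁ y₁ x₂ y₂ x₃ y₃ x₄ y₄ : Fin d) :
    ∑ n : Fin d, ∑ m : Fin d,
      canME d n m (x₁, y₁) * (starRingEnd ℂ) (canME d n m (x₂, y₂))
        * (starRingEnd ℂ) (canME d n m (x₃, y₃)) * canME d n m (x₄, y₄)
      = if (y₁ - x₁ = y₂ - x₂ ∧ y₁ - x₁ = y₃ - x₃ ∧ y₁ - x₁ = y₄ - x₄ ∧ x₁ + x₄ = x₂ + x₃)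
        then ((d : ℂ))⁻¹ else 0 := by
  set c0 : ℂ := (((1 / Real.sqrt d : ℝ) : ℂ)) with hc0
  set t : ℤ := ((x₁.val : ℤ) + x₄.val) - ((x₂.val : ℤ) + x₃.val) with ht
  have hterm : ∀ n m : Fin d,
      canME d n m (x₁, y₁) * (starRingEnd ℂ) (canME d n m (x₂, y₂))
        * (starRingEnd ℂ) (canME d n m (x₃, y₃)) * canME d n m (x₄, y₄)
      = if (m = y₁ - x₁ ∧ (y₁ - x₁ = y₂ - x₂ ∧ y₁ - x₁ = y₃ - x₃ ∧ y₁ - x₁ = y₄ - x₄))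
          then c0 ^ 4 * om d ^ ((n : ℤ) * t) else 0 := by
    intro n m
    rw [canME_apply, conj_canME_apply, conj_canME_apply, canME_apply, ite_mul_ite4]
    have equiv : (y₁ = x₁ + m ∧ y₂ = x₂ + m ∧ y₃ = x₃ + m ∧ y₄ = x₄ + m)
        ↔ (m = y₁ - x₁ ∧ (y₁ - x₁ = y₂ - x₂ ∧ y₁ - x₁ = y₃ - x₃ ∧ y₁ - x₁ = y₄ - x₄)) := by
      constructor
      · rintro ⟨h1, h2, h3, h4⟩
        exact ⟨by open Fin.CommRing in linear_combination -h1, ⟨by open Fin.CommRing in linear_combination h1 - h2,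
          by open Fin.CommRing in linear_combination h1 - h3, by open Fin.CommRing in linear_combination h1 - h4⟩⟩
      · rintro ⟨hm, h2, h3, h4⟩
        exact ⟨by open Fin.CommRing in linear_combination -hm, by open Fin.CommRing in linear_combination -hm - h2,
          by open Fin.CommRing in linear_combination -hm - h3, by open Fin.CommRing in linear_combination -hm - h4⟩
    rw [if_congr equiv rfl rfl]
    split_ifs with h
    · have hexp : ((x₁.val * n.val : ℕ) : ℤ) + (-((x₂.val * n.val : ℕ) : ℤ))
          + (-((x₃.val * n.val : ℕ) : ℤ)) + ((x₄.val * n.val : ℕ) : ℤ) = (n : ℤ) * t := by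
        push_cast; ring
      calc c0 * om d ^ ((x₁.val * n.val : ℕ) : ℤ) * (c0 * om d ^ (-((x₂.val * n.val : ℕ) : ℤ)))
            * (c0 * om d ^ (-((x₃.val * n.val : ℕ) : ℤ))) * (c0 * om d ^ ((x₄.val * n.val : ℕ) : ℤ))
          = c0 ^ 4 * (om d ^ ((x₁.val * n.val : ℕ) : ℤ) * om d ^ (-((x₂.val * n.val : ℕ) : ℤ))
            * om d ^ (-((x₃.val * n.val : ℕ) : ℤ)) * om d ^ ((x₄.val * n.val : ℕ) : ℤ)) := by ring
        _ = c0 ^ 4 * om d ^ (((x₁.val * n.val : ℕ) : ℤ) + (-((x₂.val * n.val : ℕ) : ℤ))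
            + (-((x₃.val * n.val : ℕ) : ℤ)) + ((x₄.val * n.val : ℕ) : ℤ)) := by
            rw [← zpow_add₀ (om_ne_zero d), ← zpow_add₀ (om_ne_zero d), ← zpow_add₀ (om_ne_zero d)]
        _ = c0 ^ 4 * om d ^ ((n : ℤ) * t) := by rw [hexp]
    · rfl
  simp only [hterm]
  have hinner : ∀ n : Fin d,
      ∑ m : Fin d, (if (m = y₁ - x₁ ∧ (y₁ - x₁ = y₂ - x₂ ∧ y₁ - x₁ = y₃ - x₃ ∧ y₁ - x₁ = y₄ - x₄))
          then c0 ^ 4 * om d ^ ((n : ℤ) * t) else 0)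
        = if (y₁ - x₁ = y₂ - x₂ ∧ y₁ - x₁ = y₃ - x₃ ∧ y₁ - x₁ = y₄ - x₄)
          then c0 ^ 4 * om d ^ ((n : ℤ) * t) else 0 := by
    intro n
    have hsplit : ∀ m : Fin d,
        (if (m = y₁ - x₁ ∧ (y₁ - x₁ = y₂ - x₂ ∧ y₁ - x₁ = y₃ - x₃ ∧ y₁ - x₁ = y₄ - x₄))
          then c0 ^ 4 * om d ^ ((n : ℤ) * t) else 0)
        = if m = y₁ - x₁ then (if (y₁ - x₁ = y₂ - x₂ ∧ y₁ - x₁ = y₃ - x₃ ∧ y₁ - x₁ = y₄ - x₄)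
            then c0 ^ 4 * om d ^ ((n : ℤ) * t) else 0) else 0 := by
      intro m
      by_cases h1 : m = y₁ - x₁ <;>
        by_cases h2 : (y₁ - x₁ = y₂ - x₂ ∧ y₁ - x₁ = y₃ - x₃ ∧ y₁ - x₁ = y₄ - x₄)
      · rw [if_pos ⟨h1, h2⟩, if_pos h1, if_pos h2]
      · rw [if_neg (fun hh => h2 hh.2), if_pos h1, if_neg h2]
      · rw [if_neg (fun hh => h1 hh.1), if_neg h1]
      · rw [if_neg (fun hh => h1 hh.1), if_neg h1]
    simp only [hsplit]
    simpa using Finset.sum_ite_eq' Finset.univ (y₁ - x₁)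
      (fun _ => if (y₁ - x₁ = y₂ - x₂ ∧ y₁ - x₁ = y₃ - x₃ ∧ y₁ - x₁ = y₄ - x₄)
        then c0 ^ 4 * om d ^ ((n : ℤ) * t) else 0)
  simp only [hinner]
  by_cases hC : (y₁ - x₁ = y₂ - x₂ ∧ y₁ - x₁ = y₃ - x₃ ∧ y₁ - x₁ = y₄ - x₄)
  · simp only [if_pos hC]
    rw [← Finset.mul_sum, sum_om_zpow]
    have hdvd := fin_add_eq_add_iff_dvd d x₁ x₄ x₂ x₃
    by_cases h4 : x₁ + x₄ = x₂ + x₃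
    · rw [if_pos (hdvd.mp h4), if_pos ⟨hC.1, hC.2.1, hC.2.2, h4⟩, c0_pow4]
      have hd : (d : ℂ) ≠ 0 := Nat.cast_ne_zero.mpr (NeZero.ne d)
      field_simp
    · rw [if_neg (fun hdd => h4 (hdvd.mpr hdd)), mul_zero,
        if_neg (fun hh => h4 hh.2.2.2)]
  · simp only [if_neg hC, Finset.sum_const_zero]
    rw [if_neg (fun hh => hC ⟨hh.1, hh.2.1, hh.2.2.1⟩)]

/-- Orthonormality of the canonical maximally entangled basis. -/
lemma canME_inner (n m n' m' : Fin d) :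
    ∑ kl : Fin d × Fin d, (starRingEnd ℂ) (canME d n m kl) * canME d n' m' kl
      = if n = n' ∧ m = m' then 1 else 0 := by
  set c0 : ℂ := (((1 / Real.sqrt d : ℝ) : ℂ)) with hc0
  set t : ℤ := ((n'.val : ℤ)) - ((n.val : ℤ)) with ht
  rw [Fintype.sum_prod_type]
  have hterm : ∀ k l : Fin d,
      (starRingEnd ℂ) (canME d n m (k, l)) * canME d n' m' (k, l)
        = if l = k + m then (if m' = m then c0 ^ 2 * om d ^ ((k : ℤ) * t) else 0) else 0 := by
    intro k l
    rw [conj_canME_apply, canME_apply]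
    by_cases h1 : l = k + m <;> by_cases h2 : l = k + m'
    · have hm : m' = m := by rw [h1] at h2; open Fin.CommRing in linear_combination -h2
      rw [if_pos h1, if_pos h2, if_pos h1, if_pos hm]
      rw [show ((k : ℤ) * t) = (-((k.val * n.val : ℕ) : ℤ)) + ((k.val * n'.val : ℕ) : ℤ) by push_cast; ring,
        zpow_add₀ (om_ne_zero d)]
      ring
    · have hm : ¬ (m' = m) := fun hmm => h2 (by rw [hmm]; exact h1)
      rw [if_pos h1, if_neg h2, if_pos h1, if_neg hm, mul_zero]
    · rw [if_neg h1, if_neg h1, zero_mul]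
    · rw [if_neg h1, if_neg h1, zero_mul]
  simp only [hterm]
  have hinner : ∀ k : Fin d,
      ∑ l : Fin d, (if l = k + m then (if m' = m then c0 ^ 2 * om d ^ ((k : ℤ) * t) else 0) else 0)
        = if m' = m then c0 ^ 2 * om d ^ ((k : ℤ) * t) else 0 := by
    intro k
    simpa using Finset.sum_ite_eq' Finset.univ (k + m)
      (fun _ => if m' = m then c0 ^ 2 * om d ^ ((k : ℤ) * t) else 0)
  simp only [hinner]
  by_cases hm : m' = m
  · simp only [if_pos hm]
    rw [← Finset.mul_sum, sum_om_zpow]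
    have hdvd : ((d : ℤ) ∣ t) ↔ n' = n := (fin_eq_iff_dvd d n' n).symm
    by_cases hn : n' = n
    · rw [if_pos (hdvd.mpr hn), c0_sq, if_pos ⟨hn.symm, hm.symm⟩,
        inv_mul_cancel₀ (Nat.cast_ne_zero.mpr (NeZero.ne d))]
    · rw [if_neg (fun hh => hn (hdvd.mp hh)), mul_zero,
        if_neg (fun hh => hn hh.1.symm)]
  · simp only [if_neg hm, Finset.sum_const_zero]
    rw [if_neg (fun hh => hm hh.2.symm)]

end GenAux

section Spec
variable {n : Type*} [Fintype n] [DecidableEq n]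

lemma cancel_left (U V : Matrix n n ℂ) (h : U * V = 1) (X : Matrix n n ℂ) :
    U * (V * X) = X := by rw [← Matrix.mul_assoc, h, Matrix.one_mul]

lemma conj_mul_conj (V D1 D2 : Matrix n n ℂ) (hV : star V * V = 1) :
    (V * D1 * star V) * (V * D2 * star V) = V * (D1 * D2) * star V := by
  simp only [Matrix.mul_assoc]
  rw [cancel_left _ _ hV]

lemma spec_eq (ρ : Matrix n n ℂ) (h : ρ.IsHermitian) :
    ρ = (h.eigenvectorUnitary : Matrix n n ℂ) * Matrix.diagonal (RCLike.ofReal ∘ h.eigenvalues)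
      * star (h.eigenvectorUnitary : Matrix n n ℂ) := h.spectral_theorem

lemma trace_mul_matLog2_self (ρ : Matrix n n ℂ) (h : ρ.IsHermitian) :
    (ρ * matLog2 ρ).trace
      = ((∑ i, h.eigenvalues i * Real.logb 2 (h.eigenvalues i) : ℝ) : ℂ) := by
  have hU1 : (h.eigenvectorUnitary : Matrix n n ℂ) * star (h.eigenvectorUnitary : Matrix n n ℂ) = 1 :=
    (Matrix.mem_unitaryGroup_iff).mp h.eigenvectorUnitary.2
  have hU2 : star (h.eigenvectorUnitary : Matrix n n ℂ) * (h.eigenvectorUnitary : Matrix n n ℂ) = 1 :=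
    mul_eq_one_comm.mp hU1
  have hlog : matLog2 ρ = (h.eigenvectorUnitary : Matrix n n ℂ)
      * Matrix.diagonal (fun i => (Real.logb 2 (h.eigenvalues i) : ℂ))
      * star (h.eigenvectorUnitary : Matrix n n ℂ) := by
    rw [matLog2, dif_pos h]
  have hmul := conj_mul_conj (h.eigenvectorUnitary : Matrix n n ℂ)
    (Matrix.diagonal (RCLike.ofReal ∘ h.eigenvalues))
    (Matrix.diagonal (fun i => (Real.logb 2 (h.eigenvalues i) : ℂ))) hU2
  rw [← spec_eq ρ h, ← hlog] at hmul
  rw [hmul, Matrix.trace_mul_cycle, ← Matrix.mul_assoc, hU2, Matrix.one_mul,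
    Matrix.diagonal_mul_diagonal, Matrix.trace_diagonal]
  push_cast
  rfl

lemma sum_eigenvalues_transfer (ρ : Matrix n n ℂ) (h : ρ.IsHermitian)
    (W : Matrix n n ℂ) (hW : star W * W = 1) (q : n → ℝ)
    (hρ : ρ = W * Matrix.diagonal (fun i => (q i : ℂ)) * star W) (f : ℝ → ℝ) :
    ∑ i, f (h.eigenvalues i) = ∑ i, f (q i) := by
  have hW2 : W * star W = 1 := mul_eq_one_comm.mp hW
  have hU1 : (h.eigenvectorUnitary : Matrix n n ℂ) * star (h.eigenvectorUnitary : Matrix n n ℂ) = 1 :=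
    (Matrix.mem_unitaryGroup_iff).mp h.eigenvectorUnitary.2
  have hU2 : star (h.eigenvectorUnitary : Matrix n n ℂ) * (h.eigenvectorUnitary : Matrix n n ℂ) = 1 :=
    mul_eq_one_comm.mp hU1
  have hM1 : star (star W * (h.eigenvectorUnitary : Matrix n n ℂ))
      * (star W * (h.eigenvectorUnitary : Matrix n n ℂ)) = 1 := by
    rw [Matrix.star_mul, star_star]
    calc star (h.eigenvectorUnitary : Matrix n n ℂ) * W * (star W * (h.eigenvectorUnitary : Matrix n n ℂ))
        = star (h.eigenvectorUnitary : Matrix n n ℂ) * (W * (star W * (h.eigenvectorUnitary : Matrix n n ℂ))) := by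
          rw [Matrix.mul_assoc]
      _ = star (h.eigenvectorUnitary : Matrix n n ℂ) * (h.eigenvectorUnitary : Matrix n n ℂ) := by
          rw [cancel_left _ _ hW2]
      _ = 1 := hU2
  have hM2 : (star W * (h.eigenvectorUnitary : Matrix n n ℂ))
      * star (star W * (h.eigenvectorUnitary : Matrix n n ℂ)) = 1 := mul_eq_one_comm.mp hM1
  have e1 : star W * ρ * (h.eigenvectorUnitary : Matrix n n ℂ)
      = (star W * (h.eigenvectorUnitary : Matrix n n ℂ))
        * Matrix.diagonal (RCLike.ofReal ∘ h.eigenvalues) := by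
    have e1' : star W * ((h.eigenvectorUnitary : Matrix n n ℂ)
          * Matrix.diagonal (RCLike.ofReal ∘ h.eigenvalues)
          * star (h.eigenvectorUnitary : Matrix n n ℂ)) * (h.eigenvectorUnitary : Matrix n n ℂ)
        = (star W * (h.eigenvectorUnitary : Matrix n n ℂ))
          * Matrix.diagonal (RCLike.ofReal ∘ h.eigenvalues) := by
      simp only [Matrix.mul_assoc]
      rw [hU2, Matrix.mul_one]
    rw [← spec_eq ρ h] at e1'
    exact e1'
  have e2 : star W * ρ * (h.eigenvectorUnitary : Matrix n n ℂ)
      = Matrix.diagonal (fun i => (q i : ℂ)) * (star W * (h.eigenvectorUnitary : Matrix n n ℂ)) := by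
    have e2' : star W * (W * Matrix.diagonal (fun i => (q i : ℂ)) * star W) * (h.eigenvectorUnitary : Matrix n n ℂ)
        = Matrix.diagonal (fun i => (q i : ℂ)) * (star W * (h.eigenvectorUnitary : Matrix n n ℂ)) := by
      simp only [Matrix.mul_assoc]
      rw [cancel_left _ _ hW]
    rw [← hρ] at e2'
    exact e2'
  have key := e1.symm.trans e2
  have hent : ∀ i j, (star W * (h.eigenvectorUnitary : Matrix n n ℂ)) i j * (h.eigenvalues j : ℂ)
      = (q i : ℂ) * (star W * (h.eigenvectorUnitary : Matrix n n ℂ)) i j := by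
    intro i j
    have hkey := congrFun (congrFun key i) j
    rwa [Matrix.mul_diagonal, Matrix.diagonal_mul] at hkey
  set M : Matrix n n ℂ := star W * (h.eigenvectorUnitary : Matrix n n ℂ) with hMdef
  have hcol : ∀ j, ∑ i, Complex.normSq (M i j) = 1 := by
    intro j
    have h1 : (star M * M) j j = 1 := by rw [hM1, Matrix.one_apply_eq]
    have h2 : (star M * M) j j = ((∑ i, Complex.normSq (M i j) : ℝ) : ℂ) := by
      rw [Matrix.mul_apply]
      push_cast
      refine Finset.sum_congr rfl fun i _ => ?_
      rw [Matrix.star_apply, Complex.star_def, Complex.normSq_eq_conj_mul_self]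
    rw [h2] at h1
    exact_mod_cast h1
  have hrow : ∀ i, ∑ j, Complex.normSq (M i j) = 1 := by
    intro i
    have h1 : (M * star M) i i = 1 := by rw [hM2, Matrix.one_apply_eq]
    have h2 : (M * star M) i i = ((∑ j, Complex.normSq (M i j) : ℝ) : ℂ) := by
      rw [Matrix.mul_apply]
      push_cast
      refine Finset.sum_congr rfl fun j _ => ?_
      rw [Matrix.star_apply, Complex.star_def, mul_comm, Complex.normSq_eq_conj_mul_self]
    rw [h2] at h1
    exact_mod_cast h1
  calc ∑ j, f (h.eigenvalues j)
      = ∑ j, (∑ i, Complex.normSq (M i j)) * f (h.eigenvalues j) := by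
        refine Finset.sum_congr rfl fun j _ => ?_
        rw [hcol j, one_mul]
    _ = ∑ j, ∑ i, Complex.normSq (M i j) * f (h.eigenvalues j) := by
        simp only [Finset.sum_mul]
    _ = ∑ i, ∑ j, Complex.normSq (M i j) * f (h.eigenvalues j) := Finset.sum_comm
    _ = ∑ i, ∑ j, Complex.normSq (M i j) * f (q i) := by
        refine Finset.sum_congr rfl fun i _ => Finset.sum_congr rfl fun j _ => ?_
        by_cases hz : M i j = 0
        · simp [hz]
        · have hlam : h.eigenvalues j = q i := by
            have h2 := hent i j
            rw [mul_comm ((q i : ℂ)) (M i j)] at h2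
            have h3 := mul_left_cancel₀ hz h2
            exact_mod_cast h3
          rw [hlam]
    _ = ∑ i, (∑ j, Complex.normSq (M i j)) * f (q i) := by
        simp only [Finset.sum_mul]
    _ = ∑ i, f (q i) := by
        refine Finset.sum_congr rfl fun i _ => ?_
        rw [hrow i, one_mul]

lemma rcOfReal : (RCLike.ofReal : ℝ → ℂ) = Complex.ofReal := rfl

lemma unitary_conj_inj (U : Matrix n n ℂ) (hU2 : star U * U = 1)
    (X Y : Matrix n n ℂ) (h : U * X * star U = U * Y * star U) : X = Y := by
  have h2 := congrArg (fun Z => star U * Z * U) h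
  simp only [Matrix.mul_assoc] at h2
  simp only [hU2, Matrix.mul_one] at h2
  rwa [cancel_left _ _ hU2, cancel_left _ _ hU2] at h2

lemma matLog2_of_sq (σ : Matrix n n ℂ) (hσ : σ.IsHermitian) (t : ℝ) (ht : t ≠ 0)
    (hsq : σ * σ = (t : ℂ) • σ) :
    matLog2 σ = ((Real.logb 2 t / t : ℝ) : ℂ) • σ := by
  have hU1 : (hσ.eigenvectorUnitary : Matrix n n ℂ) * star (hσ.eigenvectorUnitary : Matrix n n ℂ) = 1 :=
    (Matrix.mem_unitaryGroup_iff).mp hσ.eigenvectorUnitary.2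
  have hU2 : star (hσ.eigenvectorUnitary : Matrix n n ℂ) * (hσ.eigenvectorUnitary : Matrix n n ℂ) = 1 :=
    mul_eq_one_comm.mp hU1
  have hDsq : Matrix.diagonal ((RCLike.ofReal ∘ hσ.eigenvalues : _ → ℂ))
        * Matrix.diagonal ((RCLike.ofReal ∘ hσ.eigenvalues : _ → ℂ))
      = (t : ℂ) • Matrix.diagonal ((RCLike.ofReal ∘ hσ.eigenvalues : _ → ℂ)) := by
    apply unitary_conj_inj (hσ.eigenvectorUnitary : Matrix n n ℂ) hU2
    have hmm := conj_mul_conj (hσ.eigenvectorUnitary : Matrix n n ℂ)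
      (Matrix.diagonal ((RCLike.ofReal ∘ hσ.eigenvalues : _ → ℂ)))
      (Matrix.diagonal ((RCLike.ofReal ∘ hσ.eigenvalues : _ → ℂ))) hU2
    rw [← spec_eq σ hσ] at hmm
    rw [← hmm, hsq]
    conv_lhs => rw [spec_eq σ hσ]
    rw [Matrix.mul_smul, Matrix.smul_mul]
  have hmu : ∀ i, hσ.eigenvalues i = 0 ∨ hσ.eigenvalues i = t := by
    intro i
    have hii := congrFun (congrFun hDsq i) i
    rw [Matrix.diagonal_mul_diagonal, Matrix.smul_apply, Matrix.diagonal_apply_eq,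
      Matrix.diagonal_apply_eq] at hii
    have hreal : hσ.eigenvalues i * hσ.eigenvalues i = t * hσ.eigenvalues i := by
      simp only [Function.comp_apply, smul_eq_mul, rcOfReal] at hii
      exact_mod_cast hii
    rcases mul_eq_zero.mp (by linarith : (hσ.eigenvalues i - t) * hσ.eigenvalues i = 0) with hh | hh
    · right; linarith
    · left; exact hh
  have hlogd : Matrix.diagonal (fun i => (Real.logb 2 (hσ.eigenvalues i) : ℂ))
      = ((Real.logb 2 t / t : ℝ) : ℂ) • Matrix.diagonal ((RCLike.ofReal ∘ hσ.eigenvalues : _ → ℂ)) := by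
    ext i j
    by_cases hij : i = j
    · subst hij
      rw [Matrix.smul_apply, Matrix.diagonal_apply_eq, Matrix.diagonal_apply_eq]
      rcases hmu i with hh | hh
      · simp [hh, Real.logb_zero, Function.comp_apply, rcOfReal]
      · simp only [Function.comp_apply, hh, smul_eq_mul, rcOfReal]
        push_cast
        rw [div_mul_cancel₀ _ (Complex.ofReal_ne_zero.mpr ht)]
    · rw [Matrix.smul_apply, Matrix.diagonal_apply_ne _ hij, Matrix.diagonal_apply_ne _ hij,
        smul_zero]
  rw [matLog2, dif_pos hσ, hlogd, Matrix.mul_smul, Matrix.smul_mul, ← spec_eq σ hσ]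

end Spec

section ProjAlg
variable {n : Type*} [Fintype n] [DecidableEq n]

lemma proj_apply (u : n → ℂ) (i j : n) : proj u i j = u i * (starRingEnd ℂ) (u j) := rfl

lemma proj_isHermitian (u : n → ℂ) : (proj u).IsHermitian := by
  ext i j
  simp only [Matrix.conjTranspose_apply, proj_apply, star_mul', star_star, Complex.star_def]
  rw [Complex.conj_conj]
  ring

lemma proj_posSemidef (u : n → ℂ) : (proj u).PosSemidef := by
  refine Matrix.PosSemidef.of_dotProduct_mulVec_nonneg (proj_isHermitian u) fun x => ?_
  have key : dotProduct (star x) ((proj u) *ᵥ x)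
      = (starRingEnd ℂ) (∑ j, (starRingEnd ℂ) (u j) * x j) * (∑ j, (starRingEnd ℂ) (u j) * x j) := by
    rw [dotProduct, map_sum]
    simp only [Matrix.mulVec, dotProduct, proj_apply, Pi.star_apply, Complex.star_def,
      _root_.map_mul, Complex.conj_conj, Finset.mul_sum, Finset.sum_mul]
    rw [Finset.sum_comm]
    refine Finset.sum_congr rfl fun i _ => Finset.sum_congr rfl fun j _ => ?_
    ring
  rw [key, ← Complex.normSq_eq_conj_mul_self]
  exact Complex.zero_le_real.mpr (Complex.normSq_nonneg _)

lemma trace_proj (u : n → ℂ) :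
    (proj u).trace = ∑ i, (starRingEnd ℂ) (u i) * u i := by
  rw [Matrix.trace]
  refine Finset.sum_congr rfl fun i _ => ?_
  rw [Matrix.diag_apply, proj_apply]
  ring

lemma proj_mul_proj (u v : n → ℂ) :
    proj u * proj v = (∑ i, (starRingEnd ℂ) (u i) * v i) • Matrix.vecMulVec u (star v) := by
  ext i j
  rw [Matrix.mul_apply, Matrix.smul_apply, Matrix.vecMulVec_apply, smul_eq_mul, Finset.sum_mul]
  refine Finset.sum_congr rfl fun k _ => ?_
  simp only [proj_apply, Pi.star_apply, Complex.star_def]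
  ring

section family
variable {X : Type*} [Fintype X] [DecidableEq X] (w : X → n → ℂ)

lemma sum_smul_proj_isHermitian (p : X → ℝ) :
    (∑ x, (p x : ℂ) • proj (w x)).IsHermitian := by
  unfold Matrix.IsHermitian
  rw [Matrix.conjTranspose_sum]
  refine Finset.sum_congr rfl fun x _ => ?_
  rw [Matrix.conjTranspose_smul, Complex.star_def, Complex.conj_ofReal, proj_isHermitian]

lemma sum_mulVec' {X : Type*} [Fintype X] (A : X → Matrix n n ℂ) (v : n → ℂ) :
    (∑ x, A x) *ᵥ v = ∑ x, A x *ᵥ v := by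
  ext i
  simp only [Matrix.mulVec, dotProduct, Matrix.sum_apply, Finset.sum_mul, Finset.sum_apply]
  exact Finset.sum_comm

lemma dotProduct_sum' {X : Type*} [Fintype X] (u : n → ℂ) (f : X → n → ℂ) :
    u ⬝ᵥ (∑ x, f x) = ∑ x, u ⬝ᵥ f x := by
  simp only [dotProduct, Finset.sum_apply, Finset.mul_sum]
  exact Finset.sum_comm

lemma sum_smul_proj_posSemidef (p : X → ℝ) (hp : ∀ x, 0 ≤ p x) :
    (∑ x, (p x : ℂ) • proj (w x)).PosSemidef := by
  refine Matrix.PosSemidef.of_dotProduct_mulVec_nonneg (sum_smul_proj_isHermitian w p) fun v => ?_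
  rw [sum_mulVec', dotProduct_sum']
  refine Finset.sum_nonneg fun x _ => ?_
  rw [Matrix.smul_mulVec, dotProduct_smul, smul_eq_mul]
  exact mul_nonneg (Complex.zero_le_real.mpr (hp x)) ((proj_posSemidef (w x)).dotProduct_mulVec_nonneg v)

lemma sum_smul_proj_mul (p q : X → ℝ)
    (hON : ∀ x y : X, ∑ i, (starRingEnd ℂ) (w x i) * w y i = if x = y then 1 else 0) :
    (∑ x, (p x : ℂ) • proj (w x)) * (∑ x, (q x : ℂ) • proj (w x))
      = ∑ x, ((p x * q x : ℝ) : ℂ) • proj (w x) := by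
  rw [Finset.sum_mul_sum]
  have key : ∀ x y : X, ((p x : ℂ) • proj (w x)) * ((q y : ℂ) • proj (w y))
      = if x = y then ((p x * q y : ℝ) : ℂ) • proj (w x) else 0 := by
    intro x y
    rw [smul_mul_assoc, mul_smul_comm, proj_mul_proj, hON x y, smul_smul, smul_smul]
    by_cases hxy : x = y
    · subst hxy
      rw [if_pos rfl, if_pos rfl]
      have : proj (w x) = Matrix.vecMulVec (w x) (star (w x)) := rfl
      rw [← this]
      congr 1
      push_cast
      ring
    · rw [if_neg hxy, if_neg hxy, mul_zero, zero_smul]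
  calc ∑ x, ∑ y, ((p x : ℂ) • proj (w x)) * ((q y : ℂ) • proj (w y))
      = ∑ x, ∑ y, (if x = y then ((p x * q y : ℝ) : ℂ) • proj (w x) else 0) := by
        exact Finset.sum_congr rfl fun x _ => Finset.sum_congr rfl fun y _ => key x y
    _ = ∑ x, ((p x * q x : ℝ) : ℂ) • proj (w x) := by
        refine Finset.sum_congr rfl fun x _ => ?_
        exact Finset.sum_ite_eq Finset.univ x (fun y => ((p x * q y : ℝ) : ℂ) • proj (w x))
          |>.trans (if_pos (Finset.mem_univ x))

lemma sum_smul_proj_trace (p : X → ℝ)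
    (hnorm : ∀ x, ∑ i, (starRingEnd ℂ) (w x i) * w x i = 1) :
    (∑ x, (p x : ℂ) • proj (w x)).trace = ((∑ x, p x : ℝ) : ℂ) := by
  rw [Matrix.trace_sum]
  push_cast
  refine Finset.sum_congr rfl fun x _ => ?_
  rw [Matrix.trace_smul, trace_proj, hnorm x, smul_eq_mul, mul_one]

end family

/-- Representation of an orthonormal-family mixture as `W D W*`. -/
lemma sum_proj_eq_conj_diag (u : n → n → ℂ)
    (q : n → ℝ) :
    ∑ j, (q j : ℂ) • proj (u j)
      = (Matrix.of fun i j => u j i) * Matrix.diagonal (fun j => (q j : ℂ))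
        * star (Matrix.of fun i j => u j i) := by
  ext i i'
  rw [Matrix.mul_apply]
  have hsum : ∀ k, ((Matrix.of fun i j => u j i) * Matrix.diagonal (fun j => (q j : ℂ))) i k
      * (star (Matrix.of fun i j => u j i)) k i' = (q k : ℂ) * (u k i * (starRingEnd ℂ) (u k i')) := by
    intro k
    rw [Matrix.mul_diagonal, Matrix.star_apply, Matrix.of_apply, Matrix.of_apply]
    rw [Complex.star_def]
    ring
  rw [Finset.sum_congr rfl fun k _ => hsum k]
  rw [Matrix.sum_apply]
  refine Finset.sum_congr rfl fun k _ => ?_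
  rw [Matrix.smul_apply, proj_apply, smul_eq_mul]

lemma star_mul_self_of_ON (u : n → n → ℂ)
    (hON : ∀ x y : n, ∑ i, (starRingEnd ℂ) (u x i) * u y i = if x = y then 1 else 0) :
    star (Matrix.of fun i j => u j i) * (Matrix.of fun i j => u j i) = 1 := by
  ext j k
  rw [Matrix.mul_apply, Matrix.one_apply]
  have : ∀ i, (star (Matrix.of fun i j => u j i)) j i * (Matrix.of fun i j => u j i) i k
      = (starRingEnd ℂ) (u j i) * u k i := by
    intro i
    rw [Matrix.star_apply, Matrix.of_apply, Matrix.of_apply, Complex.star_def]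
  rw [Finset.sum_congr rfl fun i _ => this i, hON j k]

/-- Shannon entropy is at most the log of the alphabet size. -/
lemma shannon_le_logb_card {α : Type*} [Fintype α] (p : α → ℝ)
    (hp : ∀ a, 0 ≤ p a) (hp1 : ∑ a, p a = 1) :
    shannon p ≤ Real.logb 2 (Fintype.card α) := by
  have hcard : 0 < Fintype.card α := by
    by_contra hc
    have : Fintype.card α = 0 := by omega
    have hempty : IsEmpty α := Fintype.card_eq_zero_iff.mp this
    rw [Finset.univ_eq_empty, Finset.sum_empty] at hp1
    norm_num at hp1
  set N : ℝ := (Fintype.card α : ℝ) with hN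
  have hN0 : 0 < N := by rw [hN]; exact_mod_cast hcard
  have key : ∀ a, -(p a * Real.log (p a)) ≤ p a * Real.log N + (1 / N - p a) := by
    intro a
    rcases eq_or_lt_of_le (hp a) with hpa | hpa
    · rw [← hpa]
      simp only [zero_mul, neg_zero, sub_zero]
      positivity
    · have h1 := Real.log_le_sub_one_of_pos (show (0:ℝ) < 1 / (p a * N) by positivity)
      have h2 : Real.log (1 / (p a * N)) = -Real.log (p a) - Real.log N := by
        rw [one_div, Real.log_inv, Real.log_mul (ne_of_gt hpa) (ne_of_gt hN0)]
        ring
      have h3 : p a * (1 / (p a * N)) = 1 / N := by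
        field_simp
      have h4 := mul_le_mul_of_nonneg_left h1 (le_of_lt hpa)
      rw [h2, mul_sub, mul_sub, h3, mul_one] at h4
      ring_nf at h4 ⊢
      linarith
  have hsum : -(∑ a, p a * Real.log (p a)) ≤ Real.log N := by
    have h6 : ∑ a, -(p a * Real.log (p a)) ≤ ∑ a, (p a * Real.log N + (1 / N - p a)) :=
      Finset.sum_le_sum (fun a _ => key a)
    have h7 : ∑ a, (p a * Real.log N + (1 / N - p a)) = Real.log N := by
      rw [Finset.sum_add_distrib, Finset.sum_sub_distrib, ← Finset.sum_mul, hp1, one_mul,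
        Finset.sum_const, Finset.card_univ, nsmul_eq_mul, ← hN,
        mul_one_div_cancel (ne_of_gt hN0)]
      ring
    have h9 : -(∑ a, p a * Real.log (p a)) = ∑ a, -(p a * Real.log (p a)) := by
      rw [← Finset.sum_neg_distrib]
    linarith
  have hlog2 : 0 < Real.log 2 := Real.log_pos (by norm_num)
  rw [shannon, Real.logb]
  have hconv : -∑ a, p a * Real.logb 2 (p a) = (-∑ a, p a * Real.log (p a)) / Real.log 2 := by
    rw [neg_div]
    congr 1
    rw [Finset.sum_div]
    refine Finset.sum_congr rfl fun a _ => ?_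
    rw [Real.logb, mul_div_assoc]
  rw [hconv]
  exact (div_le_div_iff_of_pos_right hlog2).mpr hsum

end ProjAlg


section Factor
lemma sum_factor {P Q : Type*} [Fintype P] [Fintype Q] (f : P → ℂ) (g : Q → ℂ) :
    ∑ j : P × Q, f j.1 * g j.2 = (∑ a, f a) * (∑ b, g b) := by
  rw [Finset.sum_mul_sum]
  exact Fintype.sum_prod_type _
end Factor

section WithD
variable (d : ℕ) [NeZero d]

def psix (x : Fin d × Fin d) : Fin d × Fin d → ℂ := canME d x.1 x.2

def uu (z : (Fin d × Fin d) × (Fin d × Fin d)) :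
    ((Fin d × Fin d) × (Fin d × Fin d)) → ℂ :=
  fun i => psix d z.1 (i.1.1, i.2.1) * (starRingEnd ℂ) (psix d z.2 (i.1.2, i.2.2))

def ww (x : Fin d × Fin d) : ((Fin d × Fin d) × (Fin d × Fin d)) → ℂ := uu d (x, x)

lemma psix_inner (x y : Fin d × Fin d) :
    ∑ kl : Fin d × Fin d, (starRingEnd ℂ) (psix d x kl) * psix d y kl
      = if x = y then 1 else 0 := by
  simp only [psix]
  rw [canME_inner]
  exact if_congr (Iff.symm Prod.ext_iff) rfl rfl

lemma uu_ON (z z' : (Fin d × Fin d) × (Fin d × Fin d)) :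
    ∑ i, (starRingEnd ℂ) (uu d z i) * uu d z' i = if z = z' then 1 else 0 := by
  calc ∑ i, (starRingEnd ℂ) (uu d z i) * uu d z' i
      = ∑ i : (Fin d × Fin d) × (Fin d × Fin d),
          (fun j : (Fin d × Fin d) × (Fin d × Fin d) =>
            ((starRingEnd ℂ) (psix d z.1 j.1) * psix d z'.1 j.1)
            * (psix d z.2 j.2 * (starRingEnd ℂ) (psix d z'.2 j.2)))
          (Equiv.prodProdProdComm (Fin d) (Fin d) (Fin d) (Fin d) i) := by
        refine Finset.sum_congr rfl fun i _ => ?_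
        simp only [uu, _root_.map_mul, Complex.conj_conj, Equiv.prodProdProdComm,
          Equiv.coe_fn_mk]
        ring
    _ = ∑ j : (Fin d × Fin d) × (Fin d × Fin d),
          ((starRingEnd ℂ) (psix d z.1 j.1) * psix d z'.1 j.1)
          * (psix d z.2 j.2 * (starRingEnd ℂ) (psix d z'.2 j.2)) :=
        Fintype.sum_equiv (Equiv.prodProdProdComm (Fin d) (Fin d) (Fin d) (Fin d)) _ _
          (fun i => rfl)
    _ = (∑ ab, (starRingEnd ℂ) (psix d z.1 ab) * psix d z'.1 ab)
          * (∑ ce, psix d z.2 ce * (starRingEnd ℂ) (psix d z'.2 ce)) :=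
        sum_factor (fun ab => (starRingEnd ℂ) (psix d z.1 ab) * psix d z'.1 ab)
          (fun ce => psix d z.2 ce * (starRingEnd ℂ) (psix d z'.2 ce))
    _ = (if z.1 = z'.1 then 1 else 0) * (if z.2 = z'.2 then 1 else 0) := by
        rw [psix_inner]
        congr 1
        have h2 := congrArg (starRingEnd ℂ) (psix_inner d z.2 z'.2)
        rw [map_sum] at h2
        calc ∑ ce, psix d z.2 ce * (starRingEnd ℂ) (psix d z'.2 ce)
            = ∑ ce, (starRingEnd ℂ) ((starRingEnd ℂ) (psix d z.2 ce) * psix d z'.2 ce) := by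
              refine Finset.sum_congr rfl fun ce _ => ?_
              rw [_root_.map_mul, Complex.conj_conj]
          _ = (starRingEnd ℂ) (if z.2 = z'.2 then (1:ℂ) else 0) := h2
          _ = if z.2 = z'.2 then 1 else 0 := by
              by_cases h : z.2 = z'.2 <;> simp [h]
    _ = if z = z' then 1 else 0 := by
        by_cases h1 : z.1 = z'.1 <;> by_cases h2 : z.2 = z'.2
        · rw [if_pos h1, if_pos h2, if_pos (Prod.ext_iff.mpr ⟨h1, h2⟩), mul_one]
        · rw [if_neg h2, mul_zero, if_neg (fun hh => h2 (Prod.ext_iff.mp hh).2)]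
        · rw [if_neg h1, zero_mul, if_neg (fun hh => h1 (Prod.ext_iff.mp hh).1)]
        · rw [if_neg h1, zero_mul, if_neg (fun hh => h1 (Prod.ext_iff.mp hh).1)]

lemma ww_ON (x y : Fin d × Fin d) :
    ∑ i, (starRingEnd ℂ) (ww d x i) * ww d y i = if x = y then 1 else 0 := by
  simp only [ww]
  rw [uu_ON]
  exact if_congr ⟨fun h => (Prod.ext_iff.mp h).1, fun h => by rw [h]⟩ rfl rfl

lemma toACBD_sum (c : Fin d × Fin d → ℂ) :
    toACBD (∑ x : Fin d × Fin d,
        c x • (proj (psix d x) ⊗ₖ proj (star (psix d x))))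
      = ∑ x : Fin d × Fin d, c x • proj (ww d x) := by
  ext i j
  rw [toACBD]
  simp only [Matrix.submatrix_apply, Matrix.sum_apply, Matrix.smul_apply, smul_eq_mul,
    Matrix.kroneckerMap_apply]
  refine Finset.sum_congr rfl fun x _ => ?_
  congr 1
  simp only [proj_apply, ww, uu, Pi.star_apply, Complex.star_def, _root_.map_mul,
    Complex.conj_conj]
  ring

lemma diag_split (p : Fin d × Fin d → ℝ) :
    ∑ z : (Fin d × Fin d) × (Fin d × Fin d),
        ((if z.1 = z.2 then p z.1 else 0 : ℝ) : ℂ) • proj (uu d z)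
      = ∑ x : Fin d × Fin d, (p x : ℂ) • proj (ww d x) := by
  rw [Fintype.sum_prod_type]
  refine Finset.sum_congr rfl fun x _ => ?_
  have hy : ∀ y, ((if (x, y).1 = (x, y).2 then p (x, y).1 else 0 : ℝ) : ℂ) • proj (uu d (x, y))
      = if x = y then (p x : ℂ) • proj (uu d (x, y)) else 0 := by
    intro y
    by_cases h : x = y <;> simp [h]
  simp only [hy]
  rw [Finset.sum_ite_eq Finset.univ x (fun y => (p x : ℂ) • proj (uu d (x, y))),
    if_pos (Finset.mem_univ x)]
  rfl

lemma sep_identity :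
    ∑ x : Fin d × Fin d, (((1 / (d ^ 2 : ℝ)) : ℝ) : ℂ) • proj (ww d x)
      = ∑ x : Fin d × Fin d, (((1 / (d ^ 2 : ℝ)) : ℝ) : ℂ) •
          (proj (star (psix d x)) ⊗ₖ proj (psix d x)) := by
  ext i j
  simp only [Matrix.sum_apply, Matrix.smul_apply, smul_eq_mul, Matrix.kroneckerMap_apply]
  rw [← Finset.mul_sum, ← Finset.mul_sum]
  congr 1
  have hL : ∑ x : Fin d × Fin d, proj (ww d x) i j
      = ∑ n : Fin d, ∑ m : Fin d,
          canME d n m (i.1.1, i.2.1) * (starRingEnd ℂ) (canME d n m (j.1.1, j.2.1))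
            * (starRingEnd ℂ) (canME d n m (i.1.2, i.2.2)) * canME d n m (j.1.2, j.2.2) := by
    rw [Fintype.sum_prod_type]
    refine Finset.sum_congr rfl fun n _ => Finset.sum_congr rfl fun m _ => ?_
    simp only [proj_apply, ww, uu, psix, _root_.map_mul, Complex.conj_conj]
    ring
  have hR : ∑ x : Fin d × Fin d,
        (proj (star (psix d x)) i.1 j.1 * proj (psix d x) i.2 j.2)
      = ∑ n : Fin d, ∑ m : Fin d,
          canME d n m (j.1.1, j.1.2) * (starRingEnd ℂ) (canME d n m (i.1.1, i.1.2))
            * (starRingEnd ℂ) (canME d n m (j.2.1, j.2.2)) * canME d n m (i.2.1, i.2.2) := by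
    rw [Fintype.sum_prod_type]
    refine Finset.sum_congr rfl fun n _ => Finset.sum_congr rfl fun m _ => ?_
    simp only [proj_apply, psix, Pi.star_apply, Complex.star_def, _root_.map_mul,
      Complex.conj_conj, Prod.mk.eta]
    ring
  rw [hL, hR, quadE d i.1.1 i.2.1 j.1.1 j.2.1 i.1.2 i.2.2 j.1.2 j.2.2,
    quadE d j.1.1 j.1.2 i.1.1 i.1.2 j.2.1 j.2.2 i.2.1 i.2.2]
  refine if_congr ?_ rfl rfl
  constructor
  · rintro ⟨h1, h2, h3, h4⟩
    exact ⟨by open Fin.CommRing in linear_combination h4, by open Fin.CommRing in linear_combination h3 - h1,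
      by open Fin.CommRing in linear_combination h4 + h2, by open Fin.CommRing in linear_combination h1⟩
  · rintro ⟨k1, k2, k3, k4⟩
    exact ⟨by open Fin.CommRing in linear_combination k4, by open Fin.CommRing in linear_combination k3 - k1,
      by open Fin.CommRing in linear_combination k2 + k4, by open Fin.CommRing in linear_combination k1⟩

end WithD

lemma REE_le_of_mem {A B : Type*} [Fintype A] [DecidableEq A] [Fintype B] [DecidableEq B]
    (σ : Matrix (A × B) (A × B) ℂ) (r : ℝ) (hr : 0 ≤ r)
    (ζ : Matrix (A × B) (A × B) ℂ) (hζ : IsState ζ) (hsep : IsSep ζ)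
    (hrel : r = relEnt σ ζ) : REE σ ≤ r := by
  rw [REE]
  by_cases hb : BddBelow {r | ∃ ζ : Matrix (A × B) (A × B) ℂ,
      IsState ζ ∧ IsSep ζ ∧ r = relEnt σ ζ}
  · exact csInf_le hb ⟨ζ, hζ, hsep, hrel⟩
  · rw [Real.sInf_of_not_bddBelow hb]
    exact hr

/-- **Bound on the relative entropy of entanglement for canonical ensembles with conjugate
detectors.** For the ensemble `{p_nm, |ψ_nm⟩}` with detectors `|ψ_nm⟩*`, the uniform-mixture
state is separable across the `AC : BD` cut, the relative entropy of `ρ_ABCD` with respect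
to it equals `2 log₂ d − H_s`, and hence `E^{AC:BD}(ρ_ABCD) ≤ 2 log₂ d − H_s`. -/
theorem ree_canonical_ensemble_le
    (d : ℕ) [NeZero d] (p : Fin d × Fin d → ℝ)
    (hp : ∀ nm, 0 ≤ p nm) (hp1 : ∑ nm, p nm = 1)
    (ρABCD ρunif :
      Matrix (((Fin d × Fin d) × (Fin d × Fin d))) (((Fin d × Fin d) × (Fin d × Fin d))) ℂ)
    (hρABCD : ρABCD = ∑ nm : Fin d × Fin d,
      (p nm : ℂ) • (proj (canME d nm.1 nm.2) ⊗ₖ proj (star (canME d nm.1 nm.2))))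
    (hρunif : ρunif = ∑ nm : Fin d × Fin d,
      ((1 / (d ^ 2 : ℝ)) : ℂ) • (proj (canME d nm.1 nm.2) ⊗ₖ proj (star (canME d nm.1 nm.2)))) :
    IsSep (toACBD ρunif) ∧
    relEnt (toACBD ρABCD) (toACBD ρunif) = 2 * Real.logb 2 d - shannon p ∧
    REE (toACBD ρABCD) ≤ 2 * Real.logb 2 d - shannon p := by 
  have hd0 : (d : ℝ) ≠ 0 := Nat.cast_ne_zero.mpr (NeZero.ne d)
  have ht0 : (1 / (d ^ 2 : ℝ)) ≠ 0 := by positivity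
  have hACeq : toACBD ρABCD = ∑ x : Fin d × Fin d, (p x : ℂ) • proj (ww d x) := by
    rw [hρABCD]; exact toACBD_sum d (fun x => (p x : ℂ))
  have hσeq : toACBD ρunif
      = ∑ x : Fin d × Fin d, (((1 / (d ^ 2 : ℝ)) : ℝ) : ℂ) • proj (ww d x) := by
    rw [hρunif]
    refine Eq.trans (toACBD_sum d (fun _ => ((1 / (d ^ 2 : ℝ)) : ℂ))) ?_
    refine Finset.sum_congr rfl fun x _ => ?_
    congr 1
    push_cast
    ring
  have hONw := ww_ON d
  have hnormw : ∀ x, ∑ i, (starRingEnd ℂ) (ww d x i) * ww d x i = 1 := by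
    intro x; rw [hONw x x, if_pos rfl]
  have hsum1 : ∑ _x : Fin d × Fin d, (1 / (d ^ 2 : ℝ)) = 1 := by
    rw [Finset.sum_const, Finset.card_univ, Fintype.card_prod, Fintype.card_fin, nsmul_eq_mul]
    push_cast
    field_simp
  have hHerm : (toACBD ρABCD).IsHermitian := by
    rw [hACeq]; exact sum_smul_proj_isHermitian (ww d) p
  have hσHerm : (toACBD ρunif).IsHermitian := by
    rw [hσeq]; exact sum_smul_proj_isHermitian (ww d) _
  have hσPSD : (toACBD ρunif).PosSemidef := by
    rw [hσeq]; exact sum_smul_proj_posSemidef (ww d) _ (fun _ => by positivity)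
  have hσtr : (toACBD ρunif).trace = 1 := by
    rw [hσeq, sum_smul_proj_trace (ww d) _ hnormw, hsum1, Complex.ofReal_one]
  have hσsq : toACBD ρunif * toACBD ρunif
      = (((1 / (d ^ 2 : ℝ)) : ℝ) : ℂ) • toACBD ρunif := by
    rw [hσeq, sum_smul_proj_mul (ww d) _ _ hONw, Finset.smul_sum]
    refine Finset.sum_congr rfl fun x _ => ?_
    rw [smul_smul, ← Complex.ofReal_mul]
  have hW : star (Matrix.of fun i j => uu d j i) * (Matrix.of fun i j => uu d j i) = 1 :=
    star_mul_self_of_ON (uu d) (uu_ON d)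
  have hdiag : toACBD ρABCD
      = (Matrix.of fun i j => uu d j i)
        * Matrix.diagonal (fun z => ((if z.1 = z.2 then p z.1 else 0 : ℝ) : ℂ))
        * star (Matrix.of fun i j => uu d j i) := by
    rw [hACeq, ← diag_split d p]
    exact sum_proj_eq_conj_diag (uu d) (fun z => if z.1 = z.2 then p z.1 else 0)
  have htr1 := trace_mul_matLog2_self (toACBD ρABCD) hHerm
  have htrans := sum_eigenvalues_transfer (toACBD ρABCD) hHerm _ hW
      (fun z => if z.1 = z.2 then p z.1 else 0) hdiag (fun s => s * Real.logb 2 s)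
  have hqsum : ∑ z : (Fin d × Fin d) × (Fin d × Fin d),
      (fun s => s * Real.logb 2 s) (if z.1 = z.2 then p z.1 else 0)
      = ∑ x, p x * Real.logb 2 (p x) := by
    rw [Fintype.sum_prod_type]
    refine Finset.sum_congr rfl fun x _ => ?_
    have hy : ∀ y, (fun s => s * Real.logb 2 s) (if (x, y).1 = (x, y).2 then p (x, y).1 else 0)
        = if x = y then p x * Real.logb 2 (p x) else 0 := by
      intro y
      by_cases h : x = y <;> simp [h]
    simp only [hy]
    rw [Finset.sum_ite_eq Finset.univ x (fun _ => p x * Real.logb 2 (p x)),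
      if_pos (Finset.mem_univ x)]
  have hlogσ := matLog2_of_sq (toACBD ρunif) hσHerm (1 / (d ^ 2 : ℝ)) ht0 hσsq
  have htrρσ : (toACBD ρABCD * toACBD ρunif).trace = (((1 / (d ^ 2 : ℝ)) : ℝ) : ℂ) := by
    rw [hACeq, hσeq, sum_smul_proj_mul (ww d) _ _ hONw,
      sum_smul_proj_trace (ww d) _ hnormw]
    congr 1
    rw [← Finset.sum_mul, hp1, one_mul]
  have hlogb : Real.logb 2 (1 / (d ^ 2 : ℝ)) = -(2 * Real.logb 2 d) := by
    rw [one_div, Real.logb, Real.log_inv, Real.log_pow, Real.logb]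
    push_cast
    ring
  have hre : relEnt (toACBD ρABCD) (toACBD ρunif) = 2 * Real.logb 2 d - shannon p := by
    rw [relEnt, Matrix.trace_sub, Complex.sub_re, htr1, Complex.ofReal_re]
    rw [hlogσ, Matrix.mul_smul, Matrix.trace_smul, htrρσ, smul_eq_mul,
      ← Complex.ofReal_mul, Complex.ofReal_re]
    have hsum2 : ∑ i, hHerm.eigenvalues i * Real.logb 2 (hHerm.eigenvalues i)
        = ∑ x, p x * Real.logb 2 (p x) := by
      have h9 := htrans.trans hqsum
      simpa using h9
    rw [hsum2, div_mul_cancel₀ _ ht0, hlogb, shannon]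
    ring
  have hsh2 : shannon p ≤ 2 * Real.logb 2 d := by
    have hsh := shannon_le_logb_card p hp hp1
    have hcard : ((Fintype.card (Fin d × Fin d) : ℕ) : ℝ) = (d : ℝ) ^ 2 := by
      rw [Fintype.card_prod, Fintype.card_fin]
      push_cast
      ring
    rw [hcard] at hsh
    have hpow : Real.logb 2 ((d : ℝ) ^ 2) = 2 * Real.logb 2 d := by
      rw [Real.logb, Real.log_pow, Real.logb]
      push_cast
      ring
    rw [hpow] at hsh
    exact hsh
  have hstate : IsState (toACBD ρunif) := ⟨hσPSD, hσtr⟩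
  have hsep : IsSep (toACBD ρunif) := by
    refine ⟨d * d, fun _ => 1 / (d ^ 2 : ℝ),
      fun i => proj (star (psix d (finProdFinEquiv.symm i))),
      fun i => proj (psix d (finProdFinEquiv.symm i)),
      fun _ => by positivity, ?_, ?_, ?_, ?_⟩
    · rw [Finset.sum_const, Finset.card_univ, Fintype.card_fin, nsmul_eq_mul]
      push_cast
      field_simp
    · intro i
      refine ⟨proj_posSemidef _, ?_⟩
      rw [trace_proj]
      have h1 := psix_inner d (finProdFinEquiv.symm i) (finProdFinEquiv.symm i)
      rw [if_pos rfl] at h1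
      rw [← h1]
      refine Finset.sum_congr rfl fun v _ => ?_
      simp only [Pi.star_apply, Complex.star_def, Complex.conj_conj]
      ring
    · intro i
      refine ⟨proj_posSemidef _, ?_⟩
      rw [trace_proj]
      have h1 := psix_inner d (finProdFinEquiv.symm i) (finProdFinEquiv.symm i)
      rw [if_pos rfl] at h1
      exact h1
    · rw [hσeq, sep_identity d]
      exact (Fintype.sum_equiv finProdFinEquiv.symm _ _ (fun i => rfl)).symm
  refine ⟨hsep, hre, ?_⟩
  exact REE_le_of_mem (toACBD ρABCD) _ (by linarith) (toACBD ρunif) hstate hsep hre.symm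


end LAI
end
end

section
/- Let {|ψ_nm⟩}_{n,m=0}^{d−1} be the canonical orthonormal basis of maximally entangled states of C^d ⊗ C^d and consider the ensemble {p_nm, |ψ_nm⟩} with arbitrary probabilities p_nm. Then the information accessible by LOCC satisfies I_acc^LOCC ≤ 2 log₂ d − Ē = log₂ d, where Ē = log₂ d is the (common) entanglement of the signal states; i.e., the entanglement-corrected Holevo bound n − Ē holds for such ensembles. -/
open Matrix
open scoped Kronecker ComplexOrder

noncomputable section

namespace LAI

/-! ### Auxiliary lemmas -/

private lemma trace_mul_proj {n : Type*} [Fintype n] (E : Matrix n n ℂ) (u : n → ℂ) :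
    (E * proj u).trace = star u ⬝ᵥ (E *ᵥ u) := by
  simp only [Matrix.trace, Matrix.diag, Matrix.mul_apply, proj, Matrix.vecMulVec_apply,
    dotProduct, Matrix.mulVec, Pi.star_apply]
  refine Finset.sum_congr rfl fun i _ => ?_
  rw [Finset.mul_sum]
  exact Finset.sum_congr rfl fun w _ => by ring

private lemma psd_diag {n : Type*} [Fintype n] [DecidableEq n] {M : Matrix n n ℂ}
    (hM : M.PosSemidef) (i : n) : 0 ≤ (M i i).re ∧ (M i i).im = 0 := by
  have h := hM.dotProduct_mulVec_nonneg (Pi.single i 1)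
  have he : star (Pi.single i (1:ℂ)) ⬝ᵥ M *ᵥ Pi.single i 1 = M i i := by
    simp [dotProduct, Matrix.mulVec, Pi.single_apply, apply_ite, mul_ite,
      Finset.sum_ite_eq, Finset.sum_ite_eq']
  rw [he] at h
  exact ⟨(Complex.le_def.mp h).1, ((Complex.le_def.mp h).2).symm⟩

private lemma psd_trace {n : Type*} [Fintype n] [DecidableEq n] {M : Matrix n n ℂ}
    (hM : M.PosSemidef) : 0 ≤ M.trace.re ∧ M.trace.im = 0 := by
  constructor
  · rw [Matrix.trace, Complex.re_sum]
    exact Finset.sum_nonneg fun i _ => (psd_diag hM i).1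
  · rw [Matrix.trace, Complex.im_sum]
    exact Finset.sum_eq_zero fun i _ => (psd_diag hM i).2

private lemma psd_abs_le {n : Type*} [Fintype n] [DecidableEq n] {M : Matrix n n ℂ}
    (hM : M.PosSemidef) (i j : n) :
    ‖M i j‖ ≤ Real.sqrt ((M i i).re) * Real.sqrt ((M j j).re) := by
  obtain ⟨B, rfl⟩ : ∃ B : Matrix n n ℂ, M = Bᴴ * B := by
    open scoped MatrixOrder in
    obtain ⟨B, hB⟩ := CStarAlgebra.nonneg_iff_eq_star_mul_self.mp hM.nonneg
    exact ⟨B, hB⟩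
  let col : n → EuclideanSpace ℂ n := fun a => (WithLp.equiv 2 (n → ℂ)).symm (fun k => B k a)
  have hxy : ∀ a b : n, ((Bᴴ * B) a b) = inner ℂ (col a) (col b) := by
    intro a b
    simp [col, Matrix.mul_apply, Matrix.conjTranspose_apply, PiLp.inner_apply,
      RCLike.inner_apply]
    exact Finset.sum_congr rfl fun _ _ => mul_comm _ _
  have hnorm : ∀ a : n, Real.sqrt (((Bᴴ * B) a a).re) = ‖col a‖ := by
    intro a
    rw [show (((Bᴴ * B) a a).re) = RCLike.re (inner ℂ (col a) (col a) : ℂ) by rw [hxy a a]; rfl]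
    rw [inner_self_eq_norm_sq (𝕜 := ℂ) (col a)]
    exact Real.sqrt_sq (norm_nonneg _)
  rw [hnorm i, hnorm j, hxy i j]
  exact norm_inner_le_norm (𝕜 := ℂ) (col i) (col j)

private lemma kron_conjTranspose {m n : Type*} (M : Matrix m m ℂ) (N : Matrix n n ℂ) :
    (M ⊗ₖ N)ᴴ = Mᴴ ⊗ₖ Nᴴ := by
  ext ⟨a, b⟩ ⟨c, d⟩
  simp [Matrix.conjTranspose_apply, Matrix.kroneckerMap_apply, star_mul', mul_comm]

private lemma kron_psd {m n : Type*} [Fintype m] [Fintype n] [DecidableEq m] [DecidableEq n]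
    {M : Matrix m m ℂ} {N : Matrix n n ℂ} (hM : M.PosSemidef) (hN : N.PosSemidef) :
    (M ⊗ₖ N).PosSemidef := by
  exact hM.kronecker hN

private lemma sum_kron {ι m p : Type*} [Fintype m] [Fintype p] (s : Finset ι)
    (f : ι → Matrix m m ℂ) (N : Matrix p p ℂ) :
    (∑ i ∈ s, f i) ⊗ₖ N = ∑ i ∈ s, f i ⊗ₖ N := by
  ext ⟨a, b⟩ ⟨c, e⟩
  simp [Matrix.kroneckerMap_apply, Matrix.sum_apply, Finset.sum_mul]

private lemma kron_sum {ι m p : Type*} [Fintype m] [Fintype p] (s : Finset ι)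
    (M : Matrix m m ℂ) (g : ι → Matrix p p ℂ) :
    M ⊗ₖ (∑ i ∈ s, g i) = ∑ i ∈ s, M ⊗ₖ g i := by
  ext ⟨a, b⟩ ⟨c, e⟩
  simp [Matrix.kroneckerMap_apply, Matrix.sum_apply, Finset.mul_sum]

private lemma trace_conj_cycle {n : Type*} [Fintype n] (X Y ρ : Matrix n n ℂ) :
    (X * (Y * ρ * Yᴴ)).trace = ((Yᴴ * X * Y) * ρ).trace := by
  rw [show X * (Y * ρ * Yᴴ) = (X * Y * ρ) * Yᴴ by simp only [mul_assoc],
    Matrix.trace_mul_comm, show Yᴴ * (X * Y * ρ) = (Yᴴ * X * Y) * ρ by simp only [mul_assoc]]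

private lemma conj_kron_one {A B : Type*} [Fintype A] [Fintype B] [DecidableEq A] [DecidableEq B]
    (V F : Matrix A A ℂ) (G : Matrix B B ℂ) :
    (Vᴴ * F * V) ⊗ₖ G = (V ⊗ₖ (1 : Matrix B B ℂ))ᴴ * (F ⊗ₖ G) * (V ⊗ₖ (1 : Matrix B B ℂ)) := by
  rw [kron_conjTranspose, Matrix.conjTranspose_one, ← Matrix.mul_kronecker_mul,
    ← Matrix.mul_kronecker_mul, one_mul, mul_one]

private lemma one_conj_kron {A B : Type*} [Fintype A] [Fintype B] [DecidableEq A] [DecidableEq B]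
    (W G : Matrix B B ℂ) (F : Matrix A A ℂ) :
    F ⊗ₖ (Wᴴ * G * W) = ((1 : Matrix A A ℂ) ⊗ₖ W)ᴴ * (F ⊗ₖ G) * ((1 : Matrix A A ℂ) ⊗ₖ W) := by
  rw [kron_conjTranspose, Matrix.conjTranspose_one, ← Matrix.mul_kronecker_mul,
    ← Matrix.mul_kronecker_mul, one_mul, mul_one]

private lemma LOCC.exists_povm {A B : Type} [Fintype A] [DecidableEq A] [Fintype B]
    [DecidableEq B] (P : LOCC A B) :
    ∃ (F : List ℕ → Matrix A A ℂ) (G : List ℕ → Matrix B B ℂ),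
      (∀ r ∈ P.records, (F r).PosSemidef) ∧
      (∀ r ∈ P.records, (G r).PosSemidef) ∧
      (∑ r ∈ P.records, F r ⊗ₖ G r) = 1 ∧
      (∀ r ∈ P.records, ∀ ρ : Matrix (A × B) (A × B) ℂ,
        P.outP ρ r = (((F r ⊗ₖ G r) * ρ).trace).re) := by
  induction P with
  | finish =>
      refine ⟨fun _ => 1, fun _ => 1, fun r _ => Matrix.PosSemidef.one,
        fun r _ => Matrix.PosSemidef.one, ?_, ?_⟩
      · simp [LOCC.records, Matrix.one_kronecker_one]
      · intro r hr ρ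
        simp only [LOCC.records, Finset.mem_singleton] at hr
        subst hr
        simp [LOCC.outP, Matrix.one_kronecker_one]
  | alice k V hV next ih =>
      choose F G hF hG hsum hout using ih
      set F' : List ℕ → Matrix A A ℂ := fun r => match r with
        | [] => 0
        | a :: l => if h : a < k then (V ⟨a, h⟩)ᴴ * F ⟨a, h⟩ l * V ⟨a, h⟩ else 0 with hF'
      set G' : List ℕ → Matrix B B ℂ := fun r => match r with
        | [] => 0
        | a :: l => if h : a < k then G ⟨a, h⟩ l else 0 with hG'
      have hF'c : ∀ (a : Fin k) (l : List ℕ),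
          F' (a.val :: l) = (V a)ᴴ * F a l * V a := by
        intro a l; simp [hF', a.isLt]
      have hG'c : ∀ (a : Fin k) (l : List ℕ), G' (a.val :: l) = G a l := by
        intro a l; simp [hG', a.isLt]
      have hdisj : (↑(Finset.univ : Finset (Fin k)) : Set (Fin k)).PairwiseDisjoint
          (fun a : Fin k => ((next a).records).image (List.cons a.val)) := by
        intro a _ b _ hab
        refine Finset.disjoint_left.mpr fun r hra hrb => hab ?_
        simp only [Finset.mem_image] at hra hrb
        obtain ⟨la, _, rfl⟩ := hra
        obtain ⟨lb, _, hb⟩ := hrb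
        exact Fin.val_injective (by injection hb.symm)
      have hmem : ∀ r, r ∈ (LOCC.alice k V hV next).records →
          ∃ a : Fin k, ∃ l, l ∈ (next a).records ∧ r = a.val :: l := by
        intro r hr
        simp only [LOCC.records, Finset.mem_biUnion, Finset.mem_image] at hr
        obtain ⟨a, _, l, hl, rfl⟩ := hr
        exact ⟨a, l, hl, rfl⟩
      refine ⟨F', G', ?_, ?_, ?_, ?_⟩
      · intro r hr
        obtain ⟨a, l, hl, rfl⟩ := hmem r hr
        rw [hF'c]
        exact (hF a l hl).conjTranspose_mul_mul_same (V a)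
      · intro r hr
        obtain ⟨a, l, hl, rfl⟩ := hmem r hr
        rw [hG'c]
        exact hG a l hl
      · rw [show (LOCC.alice k V hV next).records =
            Finset.univ.biUnion fun a : Fin k =>
              ((next a).records).image (List.cons a.val) from rfl,
          Finset.sum_biUnion hdisj]
        have hstep : ∀ a : Fin k,
            ∑ r ∈ ((next a).records).image (List.cons a.val), F' r ⊗ₖ G' r
              = ((V a)ᴴ * V a) ⊗ₖ (1 : Matrix B B ℂ) := by
          intro a
          rw [Finset.sum_image (fun x _ y _ h => by injection h)]
          have : ∀ l ∈ (next a).records, F' (a.val :: l) ⊗ₖ G' (a.val :: l) =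
              (V a ⊗ₖ (1 : Matrix B B ℂ))ᴴ * ((F a l ⊗ₖ G a l)
                * (V a ⊗ₖ (1 : Matrix B B ℂ))) := by
            intro l _
            rw [hF'c, hG'c, conj_kron_one, mul_assoc]
          rw [Finset.sum_congr rfl this, ← Finset.mul_sum, ← Finset.sum_mul, hsum a, one_mul,
            kron_conjTranspose, Matrix.conjTranspose_one, ← Matrix.mul_kronecker_mul, one_mul]
        rw [Finset.sum_congr rfl fun a _ => hstep a, ← sum_kron, hV, Matrix.one_kronecker_one]
      · intro r hr ρ
        obtain ⟨a, l, hl, rfl⟩ := hmem r hr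
        have : (LOCC.alice k V hV next).outP ρ (a.val :: l) =
            (next a).outP ((V a ⊗ₖ (1 : Matrix B B ℂ)) * ρ
              * (V a ⊗ₖ (1 : Matrix B B ℂ))ᴴ) l := by
          simp [LOCC.outP, a.isLt]
        rw [this, hout a l hl, hF'c, hG'c, conj_kron_one, trace_conj_cycle]
  | bob k W hW next ih =>
      choose F G hF hG hsum hout using ih
      set F' : List ℕ → Matrix A A ℂ := fun r => match r with
        | [] => 0
        | b :: l => if h : b < k then F ⟨b, h⟩ l else 0 with hF'
      set G' : List ℕ → Matrix B B ℂ := fun r => match r with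
        | [] => 0
        | b :: l => if h : b < k then (W ⟨b, h⟩)ᴴ * G ⟨b, h⟩ l * W ⟨b, h⟩ else 0 with hG'
      have hF'c : ∀ (b : Fin k) (l : List ℕ), F' (b.val :: l) = F b l := by
        intro b l; simp [hF', b.isLt]
      have hG'c : ∀ (b : Fin k) (l : List ℕ),
          G' (b.val :: l) = (W b)ᴴ * G b l * W b := by
        intro b l; simp [hG', b.isLt]
      have hdisj : (↑(Finset.univ : Finset (Fin k)) : Set (Fin k)).PairwiseDisjoint
          (fun b : Fin k => ((next b).records).image (List.cons b.val)) := by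
        intro a _ b _ hab
        refine Finset.disjoint_left.mpr fun r hra hrb => hab ?_
        simp only [Finset.mem_image] at hra hrb
        obtain ⟨la, _, rfl⟩ := hra
        obtain ⟨lb, _, hb⟩ := hrb
        exact Fin.val_injective (by injection hb.symm)
      have hmem : ∀ r, r ∈ (LOCC.bob k W hW next).records →
          ∃ b : Fin k, ∃ l, l ∈ (next b).records ∧ r = b.val :: l := by
        intro r hr
        simp only [LOCC.records, Finset.mem_biUnion, Finset.mem_image] at hr
        obtain ⟨b, _, l, hl, rfl⟩ := hr
        exact ⟨b, l, hl, rfl⟩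
      refine ⟨F', G', ?_, ?_, ?_, ?_⟩
      · intro r hr
        obtain ⟨b, l, hl, rfl⟩ := hmem r hr
        rw [hF'c]
        exact hF b l hl
      · intro r hr
        obtain ⟨b, l, hl, rfl⟩ := hmem r hr
        rw [hG'c]
        exact (hG b l hl).conjTranspose_mul_mul_same (W b)
      · rw [show (LOCC.bob k W hW next).records =
            Finset.univ.biUnion fun b : Fin k =>
              ((next b).records).image (List.cons b.val) from rfl,
          Finset.sum_biUnion hdisj]
        have hstep : ∀ b : Fin k,
            ∑ r ∈ ((next b).records).image (List.cons b.val), F' r ⊗ₖ G' r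
              = (1 : Matrix A A ℂ) ⊗ₖ ((W b)ᴴ * W b) := by
          intro b
          rw [Finset.sum_image (fun x _ y _ h => by injection h)]
          have : ∀ l ∈ (next b).records, F' (b.val :: l) ⊗ₖ G' (b.val :: l) =
              ((1 : Matrix A A ℂ) ⊗ₖ W b)ᴴ * ((F b l ⊗ₖ G b l)
                * ((1 : Matrix A A ℂ) ⊗ₖ W b)) := by
            intro l _
            rw [hF'c, hG'c, one_conj_kron, mul_assoc]
          rw [Finset.sum_congr rfl this, ← Finset.mul_sum, ← Finset.sum_mul, hsum b, one_mul,
            kron_conjTranspose, Matrix.conjTranspose_one, ← Matrix.mul_kronecker_mul, one_mul]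
        rw [Finset.sum_congr rfl fun b _ => hstep b, ← kron_sum, hW, Matrix.one_kronecker_one]
      · intro r hr ρ
        obtain ⟨b, l, hl, rfl⟩ := hmem r hr
        have : (LOCC.bob k W hW next).outP ρ (b.val :: l) =
            (next b).outP (((1 : Matrix A A ℂ) ⊗ₖ W b) * ρ
              * ((1 : Matrix A A ℂ) ⊗ₖ W b)ᴴ) l := by
          simp [LOCC.outP, b.isLt]
        rw [this, hout b l hl, hF'c, hG'c, one_conj_kron, trace_conj_cycle]

private lemma canME_exp_abs (d : ℕ) [NeZero d] (n k : Fin d) :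
    ‖Complex.exp
      (2 * (Real.pi : ℂ) * Complex.I * (k.val : ℂ) * (n.val : ℂ) / (d : ℂ))‖ = 1 := by
  have : (2 * (Real.pi : ℂ) * Complex.I * (k.val : ℂ) * (n.val : ℂ) / (d : ℂ))
      = ((2 * Real.pi * k.val * n.val / d : ℝ) : ℂ) * Complex.I := by
    push_cast
    ring
  rw [this, Complex.norm_exp_ofReal_mul_I]

private lemma canME_normSq (d : ℕ) [NeZero d] (n m : Fin d) (k : Fin d) (k' : Fin d)
    (h : k' = k + m) :
    canME d n m (k, k') * star (canME d n m (k, k')) = ((d : ℝ)⁻¹ : ℂ) := by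
  rw [Complex.star_def, Complex.mul_conj]
  have hd : (0 : ℝ) < d := Nat.cast_pos.mpr (NeZero.pos d)
  simp only [canME, h, if_pos rfl, ite_true]
  rw [Complex.normSq_mul, Complex.normSq_eq_norm_sq, Complex.normSq_eq_norm_sq, canME_exp_abs,
    Complex.norm_real, Real.norm_eq_abs]
  rw [abs_of_nonneg (by positivity)]
  rw [one_pow, mul_one]
  rw [div_pow, one_pow, Real.sq_sqrt hd.le]
  norm_num

private lemma trB_proj_canME (d : ℕ) [NeZero d] (n m : Fin d) :
    trB (proj (canME d n m)) = (((d : ℝ)⁻¹ : ℂ)) • 1 := by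
  ext i j
  simp only [trB, proj, Matrix.of_apply, Matrix.vecMulVec_apply, Pi.star_apply,
    Matrix.smul_apply, Matrix.one_apply, smul_eq_mul]
  by_cases hij : i = j
  · subst hij
    rw [if_pos rfl, mul_one]
    have key : ∀ k : Fin d, canME d n m (i, k) * star (canME d n m (i, k))
        = if k = i + m then ((d : ℝ)⁻¹ : ℂ) else 0 := by
      intro k
      by_cases hk : k = i + m
      · rw [if_pos hk, canME_normSq d n m i k hk]
      · rw [if_neg hk]
        simp only [canME]
        rw [if_neg (by simpa using hk), zero_mul]
    rw [Finset.sum_congr rfl fun k _ => key k, Finset.sum_ite_eq' Finset.univ (i + m)]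
    simp
  · rw [if_neg hij, mul_zero]
    refine Finset.sum_eq_zero fun k _ => ?_
    by_cases hk : k = i + m
    · have hkj : ¬ k = j + m := fun h => hij (by
        apply add_right_cancel (b := m); rw [← hk, ← h])
      conv_lhs => rw [show canME d n m (j, k) = 0 by simp only [canME]; rw [if_neg (by simpa using hkj)]]
      rw [star_zero, mul_zero]
    · conv_lhs => rw [show canME d n m (i, k) = 0 by simp only [canME]; rw [if_neg (by simpa using hk)]]
      rw [zero_mul]

private lemma vN_smul_one (d : ℕ) [NeZero d] :
    vN ((((d : ℝ)⁻¹ : ℂ)) • (1 : Matrix (Fin d) (Fin d) ℂ)) = Real.logb 2 d := by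
  classical
  have hd0 : (d : ℝ) ≠ 0 := Nat.cast_ne_zero.mpr (NeZero.ne d)
  have hherm : ((((d : ℝ)⁻¹ : ℂ)) • (1 : Matrix (Fin d) (Fin d) ℂ)).IsHermitian := by
    unfold Matrix.IsHermitian
    rw [Matrix.conjTranspose_smul, Matrix.conjTranspose_one]
    congr 1
    simp [star_inv₀]
  have heig : ∀ i, hherm.eigenvalues i = (d : ℝ)⁻¹ := by
    intro i
    have h1 := hherm.conjStarAlgAut_star_eigenvectorUnitary
    rw [Unitary.conjStarAlgAut_star_apply] at h1
    have hU : (star (hherm.eigenvectorUnitary : Matrix (Fin d) (Fin d) ℂ))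
        * (hherm.eigenvectorUnitary : Matrix (Fin d) (Fin d) ℂ) = 1 :=
      Unitary.coe_star_mul_self hherm.eigenvectorUnitary
    rw [Matrix.mul_smul, mul_one, Matrix.smul_mul, hU] at h1
    have h2 : ((((d : ℝ)⁻¹ : ℂ)) • (1 : Matrix (Fin d) (Fin d) ℂ)) i i
        = (Matrix.diagonal (RCLike.ofReal ∘ hherm.eigenvalues)) i i := congrFun (congrFun h1 i) i
    simp only [Matrix.smul_apply, Matrix.one_apply_eq, Matrix.diagonal_apply_eq,
      Function.comp_apply, smul_eq_mul, mul_one] at h2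
    have h3 : (((d : ℝ)⁻¹ : ℝ) : ℂ) = ((hherm.eigenvalues i : ℝ) : ℂ) := by
      push_cast
      exact h2
    exact (Complex.ofReal_inj.mp h3).symm
  rw [vN, dif_pos hherm]
  simp only [heig]
  rw [Finset.sum_const, Finset.card_univ, Fintype.card_fin, nsmul_eq_mul, Real.logb_inv]
  field_simp

private lemma trace_trB {α β : Type*} [Fintype α] [Fintype β]
    (ρ : Matrix (α × β) (α × β) ℂ) : (trB ρ).trace = ρ.trace := by
  simp [Matrix.trace, Matrix.diag, trB, Fintype.sum_prod_type]

private lemma canME_abs (d : ℕ) [NeZero d] (n m : Fin d) (v : Fin d × Fin d) :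
    ‖canME d n m v‖ = if v.2 = v.1 + m then (Real.sqrt d)⁻¹ else 0 := by
  obtain ⟨k, k'⟩ := v
  simp only [canME]
  by_cases h : k' = k + m
  · rw [if_pos h, if_pos h, norm_mul, canME_exp_abs, mul_one, Complex.norm_real, Real.norm_eq_abs]
    have hd : (0 : ℝ) < d := Nat.cast_pos.mpr (NeZero.pos d)
    rw [abs_of_nonneg (by positivity), one_div]
  · rw [if_neg h, if_neg h, norm_zero]

private lemma canME_bound (d : ℕ) [NeZero d] (n m : Fin d)
    {Pm Qm : Matrix (Fin d) (Fin d) ℂ} (hP : Pm.PosSemidef) (hQ : Qm.PosSemidef) :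
    (((Pm ⊗ₖ Qm) * proj (canME d n m)).trace).re
      ≤ (d : ℝ)⁻¹ * (Pm.trace.re * Qm.trace.re) := by
  have hd : (0 : ℝ) < d := Nat.cast_pos.mpr (NeZero.pos d)
  set u := canME d n m with hu
  set b : Fin d × Fin d → ℝ :=
    fun v => Real.sqrt ((Pm v.1 v.1).re) * Real.sqrt ((Qm v.2 v.2).re) with hb
  have hb0 : ∀ v, 0 ≤ b v := fun v => mul_nonneg (Real.sqrt_nonneg _) (Real.sqrt_nonneg _)
  -- step 1 : the trace is bounded by (∑ v, |u v| * b v)^2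
  have step1 : (((Pm ⊗ₖ Qm) * proj u).trace).re
      ≤ (∑ v, ‖u v‖ * b v) ^ 2 := by
    rw [trace_mul_proj]
    have hexp : star u ⬝ᵥ (Pm ⊗ₖ Qm) *ᵥ u
        = ∑ v, ∑ w, star (u v) * ((Pm ⊗ₖ Qm) v w * u w) := by
      simp only [dotProduct, Matrix.mulVec, Pi.star_apply, Finset.mul_sum]
    refine (Complex.re_le_norm _).trans ?_
    rw [hexp]
    refine (norm_sum_le _ _).trans ?_
    rw [sq, Finset.sum_mul_sum]
    refine Finset.sum_le_sum fun v _ => ?_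
    refine (norm_sum_le _ _).trans ?_
    refine Finset.sum_le_sum fun w _ => ?_
    rw [norm_mul, norm_mul, Complex.star_def, Complex.norm_conj]
    have h1 := psd_abs_le hP v.1 w.1
    have h2 := psd_abs_le hQ v.2 w.2
    have hEvw : ‖(Pm ⊗ₖ Qm) v w‖
        = ‖Pm v.1 w.1‖ * ‖Qm v.2 w.2‖ := by
      rw [Matrix.kroneckerMap_apply, norm_mul]
    calc ‖u v‖ * (‖(Pm ⊗ₖ Qm) v w‖ * ‖u w‖)
        = (‖u v‖ * ‖u w‖)
          * (‖Pm v.1 w.1‖ * ‖Qm v.2 w.2‖) := by rw [hEvw]; ring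
      _ ≤ (‖u v‖ * ‖u w‖)
          * ((Real.sqrt ((Pm v.1 v.1).re) * Real.sqrt ((Pm w.1 w.1).re))
            * (Real.sqrt ((Qm v.2 v.2).re) * Real.sqrt ((Qm w.2 w.2).re))) := by
          refine mul_le_mul_of_nonneg_left ?_
            (mul_nonneg (norm_nonneg _) (norm_nonneg _))
          exact mul_le_mul h1 h2 (norm_nonneg _) (by positivity)
      _ = ‖u v‖ * b v * (‖u w‖ * b w) := by rw [hb]; ring
  -- step 2 : compute the weighted sum over the diagonal support of u
  have step2 : (∑ v, ‖u v‖ * b v)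
      = (Real.sqrt d)⁻¹ * ∑ k : Fin d, b (k, k + m) := by
    rw [Fintype.sum_prod_type, Finset.mul_sum]
    refine Finset.sum_congr rfl fun k _ => ?_
    have : ∀ k' : Fin d, ‖u (k, k')‖ * b (k, k')
        = if k' = k + m then (Real.sqrt d)⁻¹ * b (k, k + m) else 0 := by
      intro k'
      rw [hu, canME_abs]
      by_cases h : k' = k + m
      · rw [if_pos h, if_pos h, h]
      · rw [if_neg h, if_neg h, zero_mul]
    rw [Finset.sum_congr rfl fun k' _ => this k', Finset.sum_ite_eq' Finset.univ (k + m)]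
    simp
  -- step 3 : Cauchy-Schwarz
  have step3 : (∑ k : Fin d, b (k, k + m)) ^ 2
      ≤ (∑ k : Fin d, (Pm k k).re) * (∑ k : Fin d, (Qm (k + m) (k + m)).re) := by
    refine Finset.sum_sq_le_sum_mul_sum_of_sq_eq_mul Finset.univ
      (fun k _ => (psd_diag hP k).1) (fun k _ => (psd_diag hQ (k + m)).1) fun k _ => ?_
    rw [hb, mul_pow, Real.sq_sqrt (psd_diag hP k).1, Real.sq_sqrt (psd_diag hQ (k + m)).1]
  have step4 : (∑ k : Fin d, (Qm (k + m) (k + m)).re) = Qm.trace.re := by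
    rw [Matrix.trace, Complex.re_sum]
    exact Equiv.sum_comp (Equiv.addRight m) (fun j => (Qm j j).re)
  have step5 : (∑ k : Fin d, (Pm k k).re) = Pm.trace.re := by
    rw [Matrix.trace, Complex.re_sum]; rfl
  calc (((Pm ⊗ₖ Qm) * proj u).trace).re
      ≤ (∑ v, ‖u v‖ * b v) ^ 2 := step1
    _ = (d : ℝ)⁻¹ * (∑ k : Fin d, b (k, k + m)) ^ 2 := by
        rw [step2, mul_pow, ← Real.sqrt_inv, Real.sq_sqrt (by positivity)]
    _ ≤ (d : ℝ)⁻¹ * (Pm.trace.re * Qm.trace.re) := by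
        refine mul_le_mul_of_nonneg_left ?_ (by positivity)
        rw [← step4, ← step5]
        exact step3

private lemma mi_le_logb {X R : Type*} [Fintype X] (Rset : Finset R) (p : X → ℝ)
    (t : X → R → ℝ) (c : R → ℝ) (S : ℝ)
    (hp : ∀ x, 0 ≤ p x) (hp1 : ∑ x, p x = 1)
    (ht0 : ∀ x, ∀ r ∈ Rset, 0 ≤ t x r) (ht1 : ∀ x, ∑ r ∈ Rset, t x r = 1)
    (htc : ∀ x, ∀ r ∈ Rset, t x r ≤ c r)
    (hcS : ∑ r ∈ Rset, c r = S) (hS : 0 < S) :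
    shannon p
      + (-∑ r ∈ Rset, (∑ x, p x * t x r) * Real.logb 2 (∑ x, p x * t x r))
      - (-∑ x, ∑ r ∈ Rset, (p x * t x r) * Real.logb 2 (p x * t x r))
      ≤ Real.logb 2 S := by
  have hl2 : (0 : ℝ) < Real.log 2 := Real.log_pos one_lt_two
  set q : R → ℝ := fun r => ∑ x, p x * t x r with hq
  have hq0 : ∀ r ∈ Rset, 0 ≤ q r := fun r hr =>
    Finset.sum_nonneg fun x _ => mul_nonneg (hp x) (ht0 x r hr)
  have hqc : ∀ r ∈ Rset, q r ≤ c r := by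
    intro r hr
    calc q r ≤ ∑ x, p x * c r := Finset.sum_le_sum fun x _ =>
          mul_le_mul_of_nonneg_left (htc x r hr) (hp x)
      _ = c r := by rw [← Finset.sum_mul, hp1, one_mul]
  have hq1 : ∑ r ∈ Rset, q r = 1 := by
    rw [hq, Finset.sum_comm]
    simp only [← Finset.mul_sum]
    rw [Finset.sum_congr rfl fun x _ => by rw [ht1 x, mul_one], hp1]
  -- decompose the joint entropy term
  have hsplit : ∀ x, ∀ r ∈ Rset, (p x * t x r) * Real.logb 2 (p x * t x r)
      = (t x r * (p x * Real.logb 2 (p x))) + p x * (t x r * Real.logb 2 (t x r)) := by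
    intro x r hr
    by_cases hpx : p x = 0
    · simp [hpx]
    by_cases htx : t x r = 0
    · simp [htx]
    rw [Real.logb_mul hpx htx]
    ring
  have hthird : (∑ x, ∑ r ∈ Rset, (p x * t x r) * Real.logb 2 (p x * t x r))
      = (∑ x, p x * Real.logb 2 (p x))
        + ∑ x, p x * ∑ r ∈ Rset, t x r * Real.logb 2 (t x r) := by
    rw [← Finset.sum_add_distrib]
    refine Finset.sum_congr rfl fun x _ => ?_
    rw [Finset.sum_congr rfl (hsplit x), Finset.sum_add_distrib, ← Finset.sum_mul, ht1 x,
      one_mul, Finset.mul_sum]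
  -- the mutual information simplifies (the `shannon p` terms cancel)
  have hmi : shannon p
      + (-∑ r ∈ Rset, q r * Real.logb 2 (q r))
      - (-∑ x, ∑ r ∈ Rset, (p x * t x r) * Real.logb 2 (p x * t x r))
      = (∑ x, p x * ∑ r ∈ Rset, t x r * Real.logb 2 (t x r))
        - ∑ r ∈ Rset, q r * Real.logb 2 (q r) := by
    rw [hthird, shannon]
    ring
  rw [hmi]
  -- bound `t log t` by `t log c`
  have hstep : (∑ x, p x * ∑ r ∈ Rset, t x r * Real.logb 2 (t x r))
      ≤ ∑ r ∈ Rset, q r * Real.logb 2 (c r) := by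
    have h1 : ∀ x, ∑ r ∈ Rset, t x r * Real.logb 2 (t x r)
        ≤ ∑ r ∈ Rset, t x r * Real.logb 2 (c r) := by
      intro x
      refine Finset.sum_le_sum fun r hr => ?_
      rcases eq_or_lt_of_le (ht0 x r hr) with h0 | h0
      · rw [← h0, zero_mul, zero_mul]
      · exact mul_le_mul_of_nonneg_left
          (Real.logb_le_logb_of_le one_lt_two h0 (htc x r hr)) h0.le
    calc (∑ x, p x * ∑ r ∈ Rset, t x r * Real.logb 2 (t x r))
        ≤ ∑ x, p x * ∑ r ∈ Rset, t x r * Real.logb 2 (c r) :=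
          Finset.sum_le_sum fun x _ => mul_le_mul_of_nonneg_left (h1 x) (hp x)
      _ = ∑ r ∈ Rset, q r * Real.logb 2 (c r) := by
          simp only [Finset.mul_sum]
          rw [Finset.sum_comm]
          refine Finset.sum_congr rfl fun r _ => ?_
          rw [hq, Finset.sum_mul]
          exact Finset.sum_congr rfl fun x _ => by ring
  refine (sub_le_sub_right hstep _).trans ?_
  rw [← Finset.sum_sub_distrib]
  -- Gibbs-type inequality
  have hgibbs : ∀ r ∈ Rset, q r * Real.logb 2 (c r) - q r * Real.logb 2 (q r)
      ≤ q r * Real.logb 2 S + (c r / S - q r) / Real.log 2 := by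
    intro r hr
    rcases eq_or_lt_of_le (hq0 r hr) with h0 | h0
    · have hcr : (0 : ℝ) ≤ c r := (le_of_eq h0).trans (hqc r hr)
      rw [← h0]
      simp only [zero_mul, mul_zero, sub_zero, zero_add, sub_zero]
      positivity
    · have hc0 : 0 < c r := h0.trans_le (hqc r hr)
      have key : Real.logb 2 (c r) - Real.logb 2 (q r)
          = Real.logb 2 S + Real.logb 2 (c r / (q r * S)) := by
        rw [Real.logb_div hc0.ne' (by positivity), Real.logb_mul h0.ne' hS.ne']
        ring
      have hx : 0 < c r / (q r * S) := by positivity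
      have hlog := Real.log_le_sub_one_of_pos hx
      have h2 : q r * Real.logb 2 (c r / (q r * S)) ≤ (c r / S - q r) / Real.log 2 := by
        have heq : q r * Real.logb 2 (c r / (q r * S))
            = q r * Real.log (c r / (q r * S)) / Real.log 2 := by
          rw [Real.logb]; ring
        rw [heq, div_le_div_iff_of_pos_right hl2]
        calc q r * Real.log (c r / (q r * S)) ≤ q r * (c r / (q r * S) - 1) :=
              mul_le_mul_of_nonneg_left hlog h0.le
          _ = c r / S - q r := by field_simp
      calc q r * Real.logb 2 (c r) - q r * Real.logb 2 (q r)
          = q r * Real.logb 2 S + q r * Real.logb 2 (c r / (q r * S)) := by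
            rw [← mul_add, ← key]; ring
        _ ≤ q r * Real.logb 2 S + (c r / S - q r) / Real.log 2 := by linarith
  refine (Finset.sum_le_sum hgibbs).trans ?_
  rw [Finset.sum_add_distrib, ← Finset.sum_mul, hq1, one_mul]
  have hzero : ∑ r ∈ Rset, (c r / S - q r) / Real.log 2 = 0 := by
    rw [← Finset.sum_div, Finset.sum_sub_distrib, ← Finset.sum_div, hcS, hq1,
      div_self hS.ne', sub_self, zero_div]
  rw [hzero, add_zero]

/-- **Entanglement-corrected Holevo bound for canonical maximally entangled ensembles.**
Each canonical state `|ψ_nm⟩` has entanglement `log₂ d`, and for any prior probabilities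
`p_nm` and any LOCC protocol the extracted mutual information is bounded by
`2 log₂ d − log₂ d = log₂ d`. -/
theorem locc_info_canonical_ensemble_le
    (d : ℕ) [NeZero d] (p : Fin d × Fin d → ℝ)
    (hp : ∀ nm, 0 ≤ p nm) (hp1 : ∑ nm, p nm = 1)
    (P : LOCC (Fin d) (Fin d)) :
    (∀ nm : Fin d × Fin d, vN (trB (proj (canME d nm.1 nm.2))) = Real.logb 2 d) ∧
    P.info p (fun nm => proj (canME d nm.1 nm.2)) ≤
      2 * Real.logb 2 d - Real.logb 2 d := by
  have hd : (0 : ℝ) < d := Nat.cast_pos.mpr (NeZero.pos d)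
  have hd0 : (d : ℝ) ≠ 0 := hd.ne'
  constructor
  · intro nm
    rw [trB_proj_canME, vN_smul_one]
  · have hL : 2 * Real.logb 2 d - Real.logb 2 d = Real.logb 2 d := by ring
    rw [hL]
    obtain ⟨F, G, hF, hG, hsum, hout⟩ := P.exists_povm
    set ρ : Fin d × Fin d → Matrix (Fin d × Fin d) (Fin d × Fin d) ℂ :=
      fun nm => proj (canME d nm.1 nm.2) with hρ
    have htr : ∀ nm : Fin d × Fin d, (ρ nm).trace = 1 := by
      intro nm
      rw [hρ, ← trace_trB, trB_proj_canME, Matrix.trace_smul, Matrix.trace_one]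
      simp only [Fintype.card_fin, smul_eq_mul, Complex.ofReal_inv, Complex.ofReal_natCast]
      exact inv_mul_cancel₀ (by exact_mod_cast hd0)
    set cfun : List ℕ → ℝ :=
      fun r => (d : ℝ)⁻¹ * ((F r).trace.re * (G r).trace.re) with hcfun
    have htrsum : ∀ x : Fin d × Fin d,
        ((∑ r ∈ P.records, F r ⊗ₖ G r) * ρ x).trace.re
          = ∑ r ∈ P.records, ((F r ⊗ₖ G r) * ρ x).trace.re := by
      intro x
      rw [Finset.sum_mul, Matrix.trace_sum, Complex.re_sum]
    have ht0 : ∀ x : Fin d × Fin d, ∀ r ∈ P.records, 0 ≤ P.outP (ρ x) r := by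
      intro x r hr
      rw [hout r hr, hρ, trace_mul_proj]
      have := (kron_psd (hF r hr) (hG r hr)).dotProduct_mulVec_nonneg (canME d x.1 x.2)
      exact (Complex.le_def.mp this).1
    have ht1 : ∀ x : Fin d × Fin d, ∑ r ∈ P.records, P.outP (ρ x) r = 1 := by
      intro x
      calc ∑ r ∈ P.records, P.outP (ρ x) r
          = ∑ r ∈ P.records, ((F r ⊗ₖ G r) * ρ x).trace.re :=
            Finset.sum_congr rfl fun r hr => hout r hr (ρ x)
        _ = ((∑ r ∈ P.records, F r ⊗ₖ G r) * ρ x).trace.re := (htrsum x).symm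
        _ = 1 := by rw [hsum, one_mul, htr x, Complex.one_re]
    have htc : ∀ x : Fin d × Fin d, ∀ r ∈ P.records, P.outP (ρ x) r ≤ cfun r := by
      intro x r hr
      rw [hout r hr, hρ]
      exact canME_bound d x.1 x.2 (hF r hr) (hG r hr)
    have hcS : ∑ r ∈ P.records, cfun r = (d : ℝ) := by
      have h1 : ∀ r ∈ P.records, cfun r = (d : ℝ)⁻¹ * ((F r ⊗ₖ G r).trace).re := by
        intro r hr
        rw [hcfun, Matrix.trace_kronecker, Complex.mul_re, (psd_trace (hF r hr)).2,
          (psd_trace (hG r hr)).2, mul_zero, sub_zero]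
      rw [Finset.sum_congr rfl h1, ← Finset.mul_sum, ← Complex.re_sum, ← Matrix.trace_sum,
        hsum, Matrix.trace_one]
      simp only [Fintype.card_prod, Fintype.card_fin, Complex.natCast_re]
      push_cast
      field_simp
    have := mi_le_logb P.records p (fun x r => P.outP (ρ x) r) cfun (d : ℝ)
      hp hp1 ht0 ht1 htc hcS hd
    exact this

end LAI
end
end

section
/- The four Bell states of C²⊗C², given with equal prior probabilities 1/4, satisfy I_acc^LOCC ≤ 1 < 2 = H_s. In particular, no LOCC protocol can perfectly distinguish the four Bell states, since perfect discrimination would require accessible information equal to 2 bits. -/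
open Matrix
open scoped Kronecker ComplexOrder

noncomputable section

namespace LAI

/-- The four Bell states `(|00⟩ ± |11⟩)/√2`, `(|01⟩ ± |10⟩)/√2` of `ℂ² ⊗ ℂ²`. -/
def bell (x : Fin 4) : Fin 2 × Fin 2 → ℂ := fun ij =>
  (((Real.sqrt 2)⁻¹ : ℝ) : ℂ) *
    (if x.val ≤ 1 then
      (if ij = (0, 0) then 1 else if ij = (1, 1) then (if x.val = 0 then 1 else -1) else 0)
    else
      (if ij = (0, 1) then 1 else if ij = (1, 0) then (if x.val = 2 then 1 else -1) else 0))

/-!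
Every outcome record of an LOCC protocol is produced by a single product Kraus operator
`M ⊗ N`. Up to the factor `1/√2`, the entries of `(M ⊗ N)|Φ_x⟩` are `ab + cd, ab - cd,
ad + cb, ad - cb` for the four Bell states, with `a, c` a row of `M` and `b, d` a row of `N`;
so no Bell state carries more than half the weight of any record. The posterior of the
label given a record is therefore at most `1/2` on each state, which forces
`H(X | R) ≥ 1` and hence `I(X : R) ≤ H(X) - 1 = 1`.
-/

lemma sum_kronecker {ι l m n p α : Type*} [Fintype ι] [Semiring α] (X : ι → Matrix l m α)
    (Y : Matrix n p α) : ∑ i, X i ⊗ₖ Y = (∑ i, X i) ⊗ₖ Y := by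
  ext; simp [Matrix.sum_apply, Finset.sum_mul]

lemma kronecker_sum {ι l m n p α : Type*} [Fintype ι] [Semiring α] (X : Matrix l m α)
    (Y : ι → Matrix n p α) : ∑ i, X ⊗ₖ Y i = X ⊗ₖ ∑ i, Y i := by
  ext; simp [Matrix.sum_apply, Finset.mul_sum]

lemma sum_trace_conj_eq_trace {n ι : Type*} [Fintype n] [DecidableEq n] [Fintype ι]
    (K : ι → Matrix n n ℂ) (hK : ∑ i, (K i)ᴴ * K i = 1) (ρ : Matrix n n ℂ) :
    ∑ i, (K i * ρ * (K i)ᴴ).trace = ρ.trace := by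
  simp_rw [trace_mul_cycle _ ρ, ← trace_sum, ← Finset.sum_mul, hK, one_mul]

lemma sum_mul_logb_le_of_two_mul_le_sum {ι : Type*} [Fintype ι] (u : ι → ℝ)
    (h0 : ∀ i, 0 ≤ u i) (hhalf : ∀ i, 2 * u i ≤ ∑ j, u j) :
    ∑ i, u i * Real.logb 2 (u i) ≤ (∑ i, u i) * Real.logb 2 (∑ i, u i) - ∑ i, u i := by
  set S := ∑ j, u j
  have hterm : ∀ i, u i * Real.logb 2 (u i) ≤ u i * (Real.logb 2 S - 1) := by
    intro i
    rcases (h0 i).eq_or_lt with h | h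
    · simp [← h]
    have hS : 0 < S := by linarith [hhalf i]
    have hlog : Real.logb 2 (u i) ≤ Real.logb 2 (S / 2) :=
      Real.logb_le_logb_of_le one_lt_two h (by linarith [hhalf i])
    rw [Real.logb_div hS.ne' two_ne_zero, Real.logb_self_eq_one one_lt_two] at hlog
    exact mul_le_mul_of_nonneg_left hlog h.le
  calc ∑ i, u i * Real.logb 2 (u i) ≤ ∑ i, u i * (Real.logb 2 S - 1) :=
        Finset.sum_le_sum fun i _ => hterm i
    _ = S * Real.logb 2 S - S := by rw [← Finset.sum_mul]; ring

lemma shannon_uniform {α : Type*} [Fintype α] :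
    shannon (fun _ : α => 1 / (Fintype.card α : ℝ)) = Real.logb 2 (Fintype.card α) := by
  rcases (Nat.cast_nonneg (α := ℝ) (Fintype.card α)).eq_or_lt with h | h
  · simp [shannon, ← h]
  · simp only [shannon, one_div, Real.logb_inv, mul_neg, Finset.sum_neg_distrib,
      Finset.sum_const, Finset.card_univ, nsmul_eq_mul, neg_neg]
    field_simp

namespace LOCC

variable {A B : Type} [Fintype A] [DecidableEq A] [Fintype B] [DecidableEq B]

lemma sum_biUnion_image_cons {k : ℕ} (S : Fin k → Finset (List ℕ)) (g : List ℕ → ℝ) :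
    ∑ r ∈ Finset.univ.biUnion (fun a : Fin k => (S a).image (List.cons a.val)), g r
      = ∑ a, ∑ l ∈ S a, g (a.val :: l) := by
  have hdisj : Set.PairwiseDisjoint ↑(Finset.univ : Finset (Fin k))
      (fun a : Fin k => (S a).image (List.cons a.val)) := by
    intro a _ b _ hab
    simp only [Function.onFun, Finset.disjoint_left, Finset.mem_image]
    rintro r ⟨l, _, rfl⟩ ⟨l', _, h⟩
    exact hab (Fin.val_injective (List.head_eq_of_cons_eq h.symm))
  rw [Finset.sum_biUnion hdisj]
  exact Finset.sum_congr rfl fun a _ =>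
    Finset.sum_image fun _ _ _ _ h => List.cons_injective h

lemma sum_outP_eq_trace (P : LOCC A B) (ρ : Matrix (A × B) (A × B) ℂ) :
    ∑ r ∈ P.records, P.outP ρ r = ρ.trace.re := by
  induction P generalizing ρ with
  | finish => simp [records, outP]
  | alice k V hV next ih =>
    have hK : ∑ a, (V a ⊗ₖ (1 : Matrix B B ℂ))ᴴ * (V a ⊗ₖ 1) = 1 := by
      simp_rw [conjTranspose_kronecker, conjTranspose_one, ← mul_kronecker_mul, one_mul,
        sum_kronecker, hV, one_kronecker_one]
    rw [records, sum_biUnion_image_cons, ← sum_trace_conj_eq_trace _ hK, Complex.re_sum]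
    exact Finset.sum_congr rfl fun a _ => by simp only [outP, a.isLt, dif_pos, ih]
  | bob k W hW next ih =>
    have hK : ∑ b, ((1 : Matrix A A ℂ) ⊗ₖ W b)ᴴ * (1 ⊗ₖ W b) = 1 := by
      simp_rw [conjTranspose_kronecker, conjTranspose_one, ← mul_kronecker_mul, one_mul,
        kronecker_sum, hW, one_kronecker_one]
    rw [records, sum_biUnion_image_cons, ← sum_trace_conj_eq_trace _ hK, Complex.re_sum]
    exact Finset.sum_congr rfl fun b _ => by simp only [outP, b.isLt, dif_pos, ih]

lemma exists_outP_eq_trace_conj_kronecker (P : LOCC A B) {r : List ℕ} (hr : r ∈ P.records) :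
    ∃ (M : Matrix A A ℂ) (N : Matrix B B ℂ), ∀ ρ,
      P.outP ρ r = ((M ⊗ₖ N) * ρ * (M ⊗ₖ N)ᴴ).trace.re := by
  induction P generalizing r with
  | finish =>
    obtain rfl : r = [] := Finset.mem_singleton.mp hr
    exact ⟨1, 1, fun ρ => by simp [outP]⟩
  | alice k V hV next ih =>
    simp only [records, Finset.mem_biUnion, Finset.mem_image, Finset.mem_univ, true_and] at hr
    obtain ⟨a, l, hl, rfl⟩ := hr
    obtain ⟨M, N, h⟩ := ih a hl
    refine ⟨M * V a, N, fun ρ => ?_⟩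
    rw [show (M * V a) ⊗ₖ N = (M ⊗ₖ N) * (V a ⊗ₖ 1) by rw [← mul_kronecker_mul, mul_one]]
    simp only [outP, a.isLt, dif_pos, h, conjTranspose_mul, Matrix.mul_assoc]
  | bob k W hW next ih =>
    simp only [records, Finset.mem_biUnion, Finset.mem_image, Finset.mem_univ, true_and] at hr
    obtain ⟨b, l, hl, rfl⟩ := hr
    obtain ⟨M, N, h⟩ := ih b hl
    refine ⟨M, N * W b, fun ρ => ?_⟩
    rw [show M ⊗ₖ (N * W b) = (M ⊗ₖ N) * (1 ⊗ₖ W b) by rw [← mul_kronecker_mul, mul_one]]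
    simp only [outP, b.isLt, dif_pos, h, conjTranspose_mul, Matrix.mul_assoc]

lemma info_le_shannon_sub {X : Type*} [Fintype X] (P : LOCC A B) (p : X → ℝ)
    (ρ : X → Matrix (A × B) (A × B) ℂ)
    (h0 : ∀ r ∈ P.records, ∀ x, 0 ≤ p x * P.outP (ρ x) r)
    (hhalf : ∀ r ∈ P.records, ∀ x,
      2 * (p x * P.outP (ρ x) r) ≤ ∑ y, p y * P.outP (ρ y) r) :
    P.info p ρ ≤ shannon p - ∑ x, p x * (ρ x).trace.re := by
  have hrecord := Finset.sum_le_sum fun r hr =>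
    sum_mul_logb_le_of_two_mul_le_sum _ (h0 r hr) (hhalf r hr)
  have htotal : ∑ r ∈ P.records, ∑ x, p x * P.outP (ρ x) r = ∑ x, p x * (ρ x).trace.re := by
    rw [Finset.sum_comm]
    simp_rw [← Finset.mul_sum, sum_outP_eq_trace]
  rw [Finset.sum_sub_distrib, htotal] at hrecord
  rw [info, Finset.sum_comm (s := Finset.univ)]
  linarith

end LOCC

lemma conj_proj {m n : Type*} [Fintype n] (K : Matrix m n ℂ) (u : n → ℂ) :
    K * proj u * Kᴴ = proj (K *ᵥ u) := by
  rw [proj, mul_vecMulVec, vecMulVec_mul, ← star_mulVec, proj]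

lemma re_trace_proj {n : Type*} [Fintype n] (u : n → ℂ) :
    (proj u).trace.re = ∑ i, Complex.normSq (u i) := by
  simp [proj, trace_vecMulVec, dotProduct, Complex.mul_conj, Complex.re_sum]

lemma normSq_mul_add_mul_le (a b c d : ℂ) :
    Complex.normSq (a * b + c * d)
      ≤ (Complex.normSq a + Complex.normSq c) * (Complex.normSq b + Complex.normSq d) := by
  simp only [Complex.normSq_apply, Complex.add_re, Complex.add_im, Complex.mul_re,
    Complex.mul_im]
  nlinarith [sq_nonneg (a.re * d.re + a.im * d.im - b.re * c.re - b.im * c.im),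
    sq_nonneg (a.im * d.re - a.re * d.im - b.re * c.im + b.im * c.re)]

def bellAmp (a b c d : ℂ) : Fin 4 → ℂ :=
  ![a * b + c * d, a * b - c * d, a * d + c * b, a * d - c * b]

-- The four squared amplitudes add up, by the parallelogram law, to twice the
-- Cauchy–Schwarz bound on each of them.
lemma two_mul_normSq_bellAmp_le (a b c d : ℂ) (x : Fin 4) :
    2 * Complex.normSq (bellAmp a b c d x) ≤ ∑ y, Complex.normSq (bellAmp a b c d y) := by
  have hsum : ∑ y, Complex.normSq (bellAmp a b c d y)
      = 2 * ((Complex.normSq a + Complex.normSq c) * (Complex.normSq b + Complex.normSq d)) := by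
    simp only [Fin.sum_univ_four, bellAmp, cons_val_zero, cons_val_one, cons_val,
      Complex.normSq_add, Complex.normSq_sub, Complex.normSq_mul]
    ring
  rw [hsum, mul_le_mul_iff_right₀ two_pos]
  fin_cases x
  · exact normSq_mul_add_mul_le a b c d
  · simpa [bellAmp, sub_eq_add_neg] using normSq_mul_add_mul_le a b (-c) d
  · simpa [bellAmp, add_comm (Complex.normSq b)] using normSq_mul_add_mul_le a d c b
  · simpa [bellAmp, sub_eq_add_neg, add_comm (Complex.normSq b)] using
      normSq_mul_add_mul_le a d (-c) b

lemma mulVec_bell (M N : Matrix (Fin 2) (Fin 2) ℂ) (x : Fin 4) (i j : Fin 2) :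
    ((M ⊗ₖ N) *ᵥ bell x) (i, j)
      = (((Real.sqrt 2)⁻¹ : ℝ) : ℂ) * bellAmp (M i 0) (N j 0) (M i 1) (N j 1) x := by
  fin_cases x <;>
    simp [mulVec, dotProduct, Fintype.sum_prod_type, Fin.sum_univ_two, bell, bellAmp,
      kroneckerMap_apply, Prod.ext_iff] <;> ring

lemma two_mul_trace_conj_bell_le (M N : Matrix (Fin 2) (Fin 2) ℂ) (x : Fin 4) :
    2 * ((M ⊗ₖ N) * proj (bell x) * (M ⊗ₖ N)ᴴ).trace.re
      ≤ ∑ y, ((M ⊗ₖ N) * proj (bell y) * (M ⊗ₖ N)ᴴ).trace.re := by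
  simp only [conj_proj, re_trace_proj]
  rw [Finset.mul_sum, Finset.sum_comm]
  refine Finset.sum_le_sum fun ⟨i, j⟩ _ => ?_
  simp only [mulVec_bell, Complex.normSq_mul, ← Finset.mul_sum]
  rw [mul_left_comm]
  exact mul_le_mul_of_nonneg_left (two_mul_normSq_bellAmp_le _ _ _ _ x) (Complex.normSq_nonneg _)

lemma re_trace_proj_bell (x : Fin 4) : (proj (bell x)).trace.re = 1 := by
  rw [re_trace_proj]
  fin_cases x <;>
    simp [bell, Fintype.sum_prod_type, Fin.sum_univ_two, Complex.normSq_ofReal] <;> norm_num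

/-- **Local indistinguishability of the four Bell states.** For the uniform ensemble of
the four Bell states the source entropy is `H_s = 2`, every LOCC protocol extracts mutual
information at most `1 < 2`, and in particular no LOCC protocol extracts the full `2` bits,
i.e. no LOCC protocol distinguishes the four Bell states perfectly. -/
theorem bell_states_locally_indistinguishable :
    shannon (fun _ : Fin 4 => (1 : ℝ) / 4) = 2 ∧
    (∀ P : LOCC (Fin 2) (Fin 2),
      P.info (fun _ : Fin 4 => (1 : ℝ) / 4) (fun x => proj (bell x)) ≤ 1) ∧
    (1 : ℝ) < 2 ∧
    ¬ ∃ P : LOCC (Fin 2) (Fin 2),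
        P.info (fun _ : Fin 4 => (1 : ℝ) / 4) (fun x => proj (bell x)) = 2 := by
  have hsource : shannon (fun _ : Fin 4 => (1 : ℝ) / 4) = 2 := by
    rw [show (4 : ℝ) = Fintype.card (Fin 4) by simp, shannon_uniform, Fintype.card_fin,
      show ((4 : ℕ) : ℝ) = 2 ^ (2 : ℕ) by norm_num, Real.logb_pow,
      Real.logb_self_eq_one one_lt_two]
    norm_num
  have hbound : ∀ P : LOCC (Fin 2) (Fin 2),
      P.info (fun _ : Fin 4 => (1 : ℝ) / 4) (fun x => proj (bell x)) ≤ 1 := by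
    intro P
    refine (P.info_le_shannon_sub _ _ (fun r hr x => ?_) (fun r hr x => ?_)).trans ?_
    · obtain ⟨M, N, h⟩ := P.exists_outP_eq_trace_conj_kronecker hr
      rw [h, conj_proj, re_trace_proj]
      exact mul_nonneg (by norm_num) (Finset.sum_nonneg fun v _ => Complex.normSq_nonneg _)
    · obtain ⟨M, N, h⟩ := P.exists_outP_eq_trace_conj_kronecker hr
      simp only [h, ← Finset.mul_sum]
      linarith [two_mul_trace_conj_bell_le M N x]
    · simp only [re_trace_proj_bell, hsource, Fin.sum_univ_four]
      norm_num
  exact ⟨hsource, hbound, one_lt_two, fun ⟨P, hP⟩ => by linarith [hbound P]⟩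

end LAI
end
end
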